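/- arXiv:1109.2494 — 4 statements merged into one kernel-verified Lean document; each statement's English description precedes it below -/
import Mathlib

section
/- (Corollary 1.5(1), twisted case; eq. (1.37).) Let l be a natural number. In the formal power series ring ℚ[[x₁, x₂, y₁, …, y_l, u]], the homogeneous component of total degree 2 of Π_{j=1}^{2} A(xⱼ) · Π_{k=1}^{l} 2cosh(yₖ/2) · cosh(u/2)^{-2} + 2^{l+1} · Π_{j=1}^{2} A(xⱼ) · cosh(u/2) equals -2^{l-3}·(x₁² + x₂² - Σ_{k=1}^{l} yₖ²). (This is the Chern-root form of {Â(TX)·det^{1/2}(2cosh((√-1/4π)R^W))/cosh²(c/2)}^{(4)} + 2^{l+1}{Â(TX)cosh(c/2)}^{(4)} = -2^{l-3}(p₁(TX) - p₁(W)) on a 4-dimensional manifold X, with W of rank 2l and c the Euler form of a rank-2 oriented bundle ξ.) -/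
/-!
Work modulo terms of total degree `≥ 3`, i.e. in the quotient by the ideal of series of
order `≥ 3`; there the images of series of order `≥ 2` multiply to zero, so a product of
factors `1 + eᵢ` with quadratic `eᵢ` is `1 + Σ eᵢ`. The factors are read off from the
exponential series: `2 cosh(y/2) ≡ 2 (1 + y²/8)`, `cosh(u/2)^{±1} ≡ 1 ± u²/8`, and
`2 sinh(x/2) = x T(x)` with `T(x) ≡ 1 + x²/24`, so cancelling `x` in `A(x) · x T(x) = x`
gives `Â(x) = T(x)⁻¹ ≡ 1 - x²/24`. Multiplying out, the sum equals
`2^l (3 - (p₁(TX) - p₁(W)) / 8)` up to degree 2, and the constant plays no role in degree 2.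
-/

open MvPowerSeries

/-- Formal exponential of a multivariate power series (with zero constant term):
the coefficient of a monomial `m` in `exp S` is `Σ_k coeff m (S^k) / k!`. -/
noncomputable def mexp {σ : Type*} (S : MvPowerSeries σ ℚ) : MvPowerSeries σ ℚ :=
  fun m => ∑ k ∈ Finset.range ((m.sum fun _ e => e) + 1),
    ((k.factorial : ℚ))⁻¹ * MvPowerSeries.coeff m (S ^ k)

/-- Formal hyperbolic cosine: `cosh S = (exp S + exp (-S)) / 2`. -/
noncomputable def mcosh {σ : Type*} (S : MvPowerSeries σ ℚ) : MvPowerSeries σ ℚ :=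
  (2 : ℚ)⁻¹ • (mexp S + mexp (-S))

theorem PowerSeries.coeff_toMvPowerSeries {R σ : Type*} [CommSemiring R] [DecidableEq σ]
    (p : PowerSeries R) (i : σ) (m : σ →₀ ℕ) :
    MvPowerSeries.coeff m (p.toMvPowerSeries i) =
      if m = Finsupp.single i (m i) then PowerSeries.coeff (m i) p else 0 := by
  split_ifs with hm
  · have := coeff_embDomain_rename (Function.Embedding.punit i) p (Finsupp.single () (m i))
    rw [Finsupp.embDomain_single] at this
    nth_rw 1 [hm]
    exact this
  · refine coeff_rename_eq_zero _ _ ?_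
    rintro ⟨n, rfl⟩
    rw [Finsupp.unique_single n, Finsupp.mapDomain_single] at hm
    simp at hm

theorem PowerSeries.coeff_rescale_exp (c : ℚ) (n : ℕ) :
    PowerSeries.coeff n (PowerSeries.rescale c (PowerSeries.exp ℚ)) = c ^ n / n.factorial := by
  rw [PowerSeries.coeff_rescale, PowerSeries.coeff_exp, Algebra.algebraMap_self_apply, mul_one_div]

theorem mexp_smul_X {σ : Type*} (c : ℚ) (i : σ) :
    mexp (c • X i) = (PowerSeries.rescale c (PowerSeries.exp ℚ)).toMvPowerSeries i := by
  classical
  ext m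
  have hpow (k : ℕ) : (c • X i : MvPowerSeries σ ℚ) ^ k =
      ((c • PowerSeries.X) ^ k : PowerSeries ℚ).toMvPowerSeries i := by
    simp
  change ∑ k ∈ Finset.range (m.degree + 1), _ = _
  simp_rw [hpow, PowerSeries.coeff_toMvPowerSeries, mul_ite, mul_zero]
  rw [Finset.sum_ite_irrel]
  split_ifs with hm
  · rw [hm, Finsupp.degree_single, Finsupp.single_eq_same, PowerSeries.coeff_rescale_exp]
    simp [smul_pow, PowerSeries.coeff_X_pow, div_eq_inv_mul]
  · simp

theorem Finset.prod_one_add_of_mul_eq_zero {ι R : Type*} [CommRing R] (s : Finset ι) (t : ι → R)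
    (h : ∀ i ∈ s, ∀ j ∈ s, t i * t j = 0) : ∏ i ∈ s, (1 + t i) = 1 + ∑ i ∈ s, t i := by
  induction s using Finset.cons_induction with
  | empty => simp
  | cons a s ha ih =>
    have hs : ∀ i ∈ s, ∀ j ∈ s, t i * t j = 0 := fun i hi j hj =>
      h i (mem_cons_of_mem hi) j (mem_cons_of_mem hj)
    have hcross : t a * ∑ i ∈ s, t i = 0 :=
      (mul_sum _ _ _).trans (sum_eq_zero fun j hj => h a (mem_cons_self a s) j (mem_cons_of_mem hj))
    rw [prod_cons, sum_cons, ih hs]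
    linear_combination hcross

namespace MvPowerSeries

section OrderIdeal

variable {σ R : Type*} [CommSemiring R]

variable (σ R) in
noncomputable def orderGeIdeal (n : ℕ) : Ideal (MvPowerSeries σ R) where
  carrier := {f | (n : ℕ∞) ≤ f.order}
  add_mem' hf hg := (le_min hf hg).trans min_order_le_add
  zero_mem' := by simp
  smul_mem' _ _ hf := hf.trans (le_add_self.trans le_order_mul)

theorem mem_orderGeIdeal {n : ℕ} {f : MvPowerSeries σ R} :
    f ∈ orderGeIdeal σ R n ↔ (n : ℕ∞) ≤ f.order :=
  Iff.rfl

theorem mul_mem_orderGeIdeal {a b : ℕ} {f g : MvPowerSeries σ R}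
    (hf : f ∈ orderGeIdeal σ R a) (hg : g ∈ orderGeIdeal σ R b) :
    f * g ∈ orderGeIdeal σ R (a + b) := by
  rw [mem_orderGeIdeal, Nat.cast_add]
  exact (add_le_add hf hg).trans le_order_mul

theorem X_pow_mem_orderGeIdeal (i : σ) (n : ℕ) : X i ^ n ∈ orderGeIdeal σ R n := by
  classical
  refine nat_le_order fun d hd => ?_
  rw [coeff_X_pow, if_neg]
  rintro rfl
  simp at hd

end OrderIdeal

section Jet

variable {σ R : Type*} [CommRing R]

/-- `jet2 f` remembers the terms of `f` of total degree at most 2. -/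
noncomputable abbrev jet2 : MvPowerSeries σ R →ₐ[R] MvPowerSeries σ R ⧸ orderGeIdeal σ R 3 :=
  Ideal.Quotient.mkₐ R _

theorem coeff_eq_of_jet2_eq {f g : MvPowerSeries σ R} (h : jet2 f = jet2 g) {d : σ →₀ ℕ}
    (hd : d.degree < 3) : coeff d f = coeff d g := by
  rw [← sub_eq_zero, ← map_sub]
  exact coeff_of_lt_order ((Nat.cast_lt.mpr hd).trans_le (Ideal.Quotient.eq.mp h))

variable (σ R) in
noncomputable def jet2Quadratic : Ideal (MvPowerSeries σ R ⧸ orderGeIdeal σ R 3) :=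
  (orderGeIdeal σ R 2).map (Ideal.Quotient.mk _)

theorem mul_eq_zero_of_mem_jet2Quadratic {x y : MvPowerSeries σ R ⧸ orderGeIdeal σ R 3}
    (hx : x ∈ jet2Quadratic σ R) (hy : y ∈ jet2Quadratic σ R) : x * y = 0 := by
  have hsq : jet2Quadratic σ R * jet2Quadratic σ R = ⊥ := by
    rw [eq_bot_iff, ← Ideal.map_quotient_self (orderGeIdeal σ R 3), jet2Quadratic,
      ← Ideal.map_mul]
    refine Ideal.map_mono (Ideal.mul_le.mpr fun f hf g hg => ?_)
    exact le_trans (by norm_num) (mem_orderGeIdeal.mp (mul_mem_orderGeIdeal hf hg))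
  simpa [hsq] using Ideal.mul_mem_mul hx hy

theorem jet2_X_sq_mem (i : σ) : jet2 (X i : MvPowerSeries σ R) ^ 2 ∈ jet2Quadratic σ R := by
  rw [← map_pow]
  exact Ideal.mem_map_of_mem _ (X_pow_mem_orderGeIdeal i 2)

theorem smul_jet2_X_sq_mem (c : R) (i : σ) :
    c • jet2 (X i : MvPowerSeries σ R) ^ 2 ∈ jet2Quadratic σ R :=
  Submodule.smul_of_tower_mem _ c (jet2_X_sq_mem i)

theorem jet2_toMvPowerSeries (p : PowerSeries R) (i : σ) :
    jet2 (p.toMvPowerSeries i) =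
      PowerSeries.coeff 0 p • 1 + PowerSeries.coeff 1 p • jet2 (X i : MvPowerSeries σ R) +
        PowerSeries.coeff 2 p • jet2 (X i : MvPowerSeries σ R) ^ 2 := by
  set q : PowerSeries R := PowerSeries.coeff 0 p • 1 + PowerSeries.coeff 1 p • PowerSeries.X +
    PowerSeries.coeff 2 p • PowerSeries.X ^ 2
  obtain ⟨r, hr⟩ : PowerSeries.X ^ 3 ∣ p - q := PowerSeries.X_pow_dvd_iff.mpr fun m hm => by
    interval_cases m <;> simp [q, PowerSeries.coeff_X_pow, PowerSeries.coeff_X]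
  have hpq : jet2 ((p - q).toMvPowerSeries i) = 0 := by
    rw [hr, map_mul, map_pow, PowerSeries.toMvPowerSeries_X]
    exact Ideal.Quotient.eq_zero_iff_mem.mpr (Ideal.mul_mem_right _ _ (X_pow_mem_orderGeIdeal i 3))
  rw [map_sub, map_sub, sub_eq_zero] at hpq
  simp only [hpq, q, map_add, map_smul, map_one, map_pow, PowerSeries.toMvPowerSeries_X]

theorem jet2_eq_one_sub_of_mul_eq_one {f g : MvPowerSeries σ R}
    {e : MvPowerSeries σ R ⧸ orderGeIdeal σ R 3} (hfg : f * g = 1) (he : e ∈ jet2Quadratic σ R)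
    (hg : jet2 g = 1 + e) : jet2 f = 1 - e :=
  calc jet2 f = jet2 f * ((1 + e) * (1 - e)) := by
        linear_combination jet2 f * mul_eq_zero_of_mem_jet2Quadratic he he
    _ = jet2 (f * g) * (1 - e) := by rw [map_mul, hg, mul_assoc]
    _ = 1 - e := by rw [hfg, map_one, one_mul]

end Jet

section Factors

variable {σ : Type*}

theorem jet2_mexp_add_mexp_neg (i : σ) :
    jet2 (mexp ((2 : ℚ)⁻¹ • X i) + mexp (-((2 : ℚ)⁻¹ • X i))) =
      (2 : ℚ) • (1 + (8 : ℚ)⁻¹ • jet2 (X i : MvPowerSeries σ ℚ) ^ 2) := by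
  rw [← neg_smul, mexp_smul_X, mexp_smul_X, ← map_add, jet2_toMvPowerSeries]
  simp only [map_add, PowerSeries.coeff_rescale_exp]
  norm_num
  module

theorem jet2_mcosh (i : σ) :
    jet2 (mcosh ((2 : ℚ)⁻¹ • X i)) = 1 + (8 : ℚ)⁻¹ • jet2 (X i : MvPowerSeries σ ℚ) ^ 2 := by
  rw [mcosh, map_smul, jet2_mexp_add_mexp_neg, inv_smul_smul₀ two_ne_zero]

theorem jet2_mcosh_inv (i : σ) :
    jet2 (mcosh ((2 : ℚ)⁻¹ • X i))⁻¹ = 1 - (8 : ℚ)⁻¹ • jet2 (X i : MvPowerSeries σ ℚ) ^ 2 := by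
  classical
  have hconst : constantCoeff (mcosh ((2 : ℚ)⁻¹ • X i)) ≠ 0 := by
    rw [← coeff_zero_eq_constantCoeff_apply, mcosh, ← neg_smul, mexp_smul_X, mexp_smul_X,
      ← map_add, map_smul, PowerSeries.coeff_toMvPowerSeries, if_pos (by simp)]
    simp only [Finsupp.coe_zero, Pi.zero_apply, map_add, PowerSeries.coeff_rescale_exp]
    norm_num
  exact jet2_eq_one_sub_of_mul_eq_one (MvPowerSeries.inv_mul_cancel _ hconst)
    (smul_jet2_X_sq_mem _ i) (jet2_mcosh i)

theorem jet2_of_mul_mexp_sub_mexp_neg_eq_X {A : MvPowerSeries σ ℚ} {i : σ}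
    (hA : A * (mexp ((2 : ℚ)⁻¹ • X i) - mexp (-((2 : ℚ)⁻¹ • X i))) = X i) :
    jet2 A = 1 - (24 : ℚ)⁻¹ • jet2 (X i : MvPowerSeries σ ℚ) ^ 2 := by
  set S : PowerSeries ℚ := PowerSeries.rescale (2 : ℚ)⁻¹ (PowerSeries.exp ℚ) -
    PowerSeries.rescale (-2⁻¹) (PowerSeries.exp ℚ)
  obtain ⟨T, hT⟩ : PowerSeries.X ∣ S := by
    rw [PowerSeries.X_dvd_iff, ← PowerSeries.coeff_zero_eq_constantCoeff_apply]
    simp only [S, map_sub, PowerSeries.coeff_rescale_exp]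
    norm_num
  have hAT : A * T.toMvPowerSeries i = 1 := by
    have hX : (X i : MvPowerSeries σ ℚ) ≠ 0 := fun h => by
      classical
      simpa using congrArg (coeff (Finsupp.single i 1)) h
    rw [← neg_smul, mexp_smul_X, mexp_smul_X, ← map_sub] at hA
    change A * S.toMvPowerSeries i = X i at hA
    rw [hT, map_mul, PowerSeries.toMvPowerSeries_X] at hA
    exact mul_left_cancel₀ hX (by linear_combination hA)
  refine jet2_eq_one_sub_of_mul_eq_one hAT (smul_jet2_X_sq_mem _ i) ?_
  have hcoeff (n : ℕ) : PowerSeries.coeff n T = PowerSeries.coeff (n + 1) S := by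
    rw [hT, PowerSeries.coeff_succ_X_mul]
  rw [jet2_toMvPowerSeries, hcoeff, hcoeff, hcoeff]
  simp only [S, map_sub, PowerSeries.coeff_rescale_exp]
  norm_num [Nat.factorial]

theorem jet2_anomaly {ι κ : Type*} [Fintype ι] [Fintype κ] (x : ι → σ) (y : κ → σ) (u : σ)
    (A : ι → MvPowerSeries σ ℚ)
    (hA : ∀ j, A j * (mexp ((2 : ℚ)⁻¹ • X (x j)) - mexp (-((2 : ℚ)⁻¹ • X (x j)))) = X (x j)) :
    jet2 ((∏ j, A j) * (∏ k, (mexp ((2 : ℚ)⁻¹ • X (y k)) + mexp (-((2 : ℚ)⁻¹ • X (y k))))) *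
          (mcosh ((2 : ℚ)⁻¹ • X u))⁻¹ ^ 2
        + (2 : ℚ) ^ (Fintype.card κ + 1) • ((∏ j, A j) * mcosh ((2 : ℚ)⁻¹ • X u))) =
      jet2 (C (3 * 2 ^ Fintype.card κ) -
        ((2 : ℚ) ^ Fintype.card κ / 8) • (∑ j, X (x j) ^ 2 - ∑ k, X (y k) ^ 2)) := by
  set n := Fintype.card κ
  set ea := (-(24 : ℚ)⁻¹) • ∑ j, jet2 (X (x j) : MvPowerSeries σ ℚ) ^ 2
  set ew := (8 : ℚ)⁻¹ • ∑ k, jet2 (X (y k) : MvPowerSeries σ ℚ) ^ 2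
  set ev := (8 : ℚ)⁻¹ • jet2 (X u : MvPowerSeries σ ℚ) ^ 2 with hev_def
  have hAhat : jet2 (∏ j, A j) = 1 + ea := by
    simp_rw [map_prod, jet2_of_mul_mexp_sub_mexp_neg_eq_X (hA _), sub_eq_add_neg, ← neg_smul]
    rw [Finset.prod_one_add_of_mul_eq_zero _ _ fun i _ j _ => mul_eq_zero_of_mem_jet2Quadratic
      (smul_jet2_X_sq_mem _ _) (smul_jet2_X_sq_mem _ _), ← Finset.smul_sum]
  have hcosh : jet2 (∏ k, (mexp ((2 : ℚ)⁻¹ • X (y k)) + mexp (-((2 : ℚ)⁻¹ • X (y k))))) =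
      (2 : ℚ) ^ n • (1 + ew) := by
    simp_rw [map_prod, jet2_mexp_add_mexp_neg, ← Finset.smul_prod]
    rw [Finset.prod_one_add_of_mul_eq_zero _ _ fun i _ j _ => mul_eq_zero_of_mem_jet2Quadratic
      (smul_jet2_X_sq_mem _ _) (smul_jet2_X_sq_mem _ _), ← Finset.smul_sum, Finset.card_univ]
  have hrhs : jet2 (C (3 * 2 ^ n) - ((2 : ℚ) ^ n / 8) • (∑ j, X (x j) ^ 2 - ∑ k, X (y k) ^ 2)) =
      (2 : ℚ) ^ n • ((3 : ℚ) • (1 + ea) + ew) := by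
    simp only [map_sub, map_smul, map_sum, map_pow, ea, ew, c_eq_algebraMap,
      Algebra.algebraMap_eq_smul_one, map_one]
    module
  have hew : ew ∈ jet2Quadratic σ ℚ :=
    Submodule.smul_of_tower_mem _ _ (Ideal.sum_mem _ fun k _ => jet2_X_sq_mem (y k))
  have hev : ev ∈ jet2Quadratic σ ℚ := smul_jet2_X_sq_mem _ u
  have haw : ea * ew = 0 := mul_eq_zero_of_mem_jet2Quadratic
    (Submodule.smul_of_tower_mem _ _ (Ideal.sum_mem _ fun j _ => jet2_X_sq_mem (x j))) hew
  rw [map_add, map_mul, map_mul, map_pow, map_smul, map_mul, hAhat, hcosh, jet2_mcosh_inv,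
    jet2_mcosh, ← hev_def, hrhs]
  simp only [Algebra.smul_def (A := MvPowerSeries σ ℚ ⧸ orderGeIdeal σ ℚ 3), map_pow, map_ofNat]
  linear_combination 2 ^ n * ((1 - ev) ^ 2 * haw - 2 * mul_eq_zero_of_mem_jet2Quadratic hew hev +
    (1 + ea + ew) * mul_eq_zero_of_mem_jet2Quadratic hev hev)

end Factors

end MvPowerSeries

/-- Corollary 1.5(1), twisted case (eq. (1.37)): in degree 2 (form degree 4),
`{Â(TX) det^{1/2}(2cosh((√-1/4π)R^W)) / cosh²(c/2)}^{(4)} + 2^{l+1}{Â(TX) cosh(c/2)}^{(4)}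
  = -2^{l-3}(p₁(TX) - p₁(W))`,
at the level of Chern roots: `±xⱼ` for `T_ℂX` (`dim X = 4`), `±yₖ` for `W_ℂ` (`rk W = 2l`),
and `u` the Euler form of the rank-2 bundle `ξ`. `A j` is the Â-series of `xⱼ`, and
`(mcosh ((2:ℚ)⁻¹ • u))⁻¹` is the multiplicative inverse of the unit power series `cosh(u/2)`. -/
theorem anomaly_dim4_twisted (l : ℕ)
    (A : Fin 2 → MvPowerSeries ((Fin 2 ⊕ Fin l) ⊕ Unit) ℚ)
    (hA : ∀ j, A j * (mexp ((2 : ℚ)⁻¹ • X (Sum.inl (Sum.inl j))) -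
        mexp (-((2 : ℚ)⁻¹ • X (Sum.inl (Sum.inl j))))) = X (Sum.inl (Sum.inl j)))
    (m : ((Fin 2 ⊕ Fin l) ⊕ Unit) →₀ ℕ) (hm : (m.sum fun _ e => e) = 2) :
    MvPowerSeries.coeff m
      ((∏ j, A j) *
          (∏ k, (mexp ((2 : ℚ)⁻¹ • X (Sum.inl (Sum.inr k))) +
            mexp (-((2 : ℚ)⁻¹ • X (Sum.inl (Sum.inr k)))))) *
          ((mcosh ((2 : ℚ)⁻¹ • X (Sum.inr ())))⁻¹) ^ 2
        + (2 : ℚ) ^ (l + 1) • ((∏ j, A j) * mcosh ((2 : ℚ)⁻¹ • X (Sum.inr ()))))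
    = MvPowerSeries.coeff m
      (-((2 : ℚ) ^ ((l : ℤ) - 3) •
        (X (Sum.inl (Sum.inl 0)) ^ 2 + X (Sum.inl (Sum.inl 1)) ^ 2 -
          ∑ k, X (Sum.inl (Sum.inr k)) ^ 2))) := by
  have hdeg : m.degree = 2 := hm
  have hm0 : m ≠ 0 := by
    rintro rfl
    simp at hdeg
  have hjet := jet2_anomaly (fun j => Sum.inl (Sum.inl j)) (fun k => Sum.inl (Sum.inr k))
    (Sum.inr ()) A hA
  rw [Fintype.card_fin] at hjet
  rw [coeff_eq_of_jet2_eq hjet (by omega), map_sub, coeff_C, if_neg hm0, zero_sub,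
    Fin.sum_univ_two, zpow_sub₀ two_ne_zero, zpow_natCast]
  norm_num
end

section
/- (Corollary 1.5(2), case ξ trivial; eq. (1.40), equivalently (1.46).) Let l be a natural number. In the formal power series ring ℚ[[x₁, …, x₄, y₁, …, y_l]], the homogeneous component of total degree 4 of exp((1/24)·(Σ_{j=1}^{4} xⱼ² - Σ_{k=1}^{l} yₖ²)) · Π_{j=1}^{4} A(xⱼ) · ( Π_{k=1}^{l} 2cosh(yₖ/2) + 2^{l-4}·Σ_{k=1}^{l}(e^{yₖ} + e^{-yₖ}) - 2^{l-3}·(l+8) ) equals 0. (This is the Chern-root form of the 8-dimensional generalized anomaly cancellation formula {e^{(1/24)(p₁(TX)-p₁(W))}[Â(TX)det^{1/2}(2cosh((√-1/4π)R^W)) - Â(TX)(-2^{l-4}ch(W_ℂ) + 2^{l-3}(l+8))]}^{(8)} = 0, with no condition on first Pontryagin forms.) -/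
open MvPowerSeries

set_option linter.unusedSectionVars false

namespace Anomaly
variable {σ : Type*} [DecidableEq σ]

def lz (n : ℕ) (f : MvPowerSeries σ ℚ) : Prop :=
  ∀ m : σ →₀ ℕ, (m.sum fun _ e => e) ≤ n → MvPowerSeries.coeff m f = 0

lemma apply_le_degsum (m : σ →₀ ℕ) (i : σ) : m i ≤ m.sum fun _ e => e := by
  by_cases h : i ∈ m.support
  · exact Finset.single_le_sum (f := fun j => m j) (fun _ _ => Nat.zero_le _) h
  · simp [Finsupp.notMem_support_iff.mp h]

lemma degsum_eq_zero {m : σ →₀ ℕ} (h : (m.sum fun _ e => e) = 0) : m = 0 := by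
  ext i
  have := apply_le_degsum m i
  simp only [Finsupp.coe_zero, Pi.zero_apply]
  omega

lemma lz_smul {n : ℕ} (q : ℚ) {f : MvPowerSeries σ ℚ} (hf : lz n f) : lz n (q • f) :=
  fun m hm => by rw [map_smul, hf m hm, smul_zero]

lemma degsum_add (a b : σ →₀ ℕ) :
    ((a + b).sum fun _ e => e) = (a.sum fun _ e => e) + (b.sum fun _ e => e) :=
  Finsupp.sum_add_index' (fun _ => rfl) (fun _ _ _ => rfl)

lemma degsum_single (i : σ) (k : ℕ) : ((Finsupp.single i k).sum fun _ e => e) = k :=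
  Finsupp.sum_single_index rfl

lemma lz_zero (n : ℕ) : lz n (0 : MvPowerSeries σ ℚ) := fun m _ => by simp

lemma lz_congr {n : ℕ} {f g : MvPowerSeries σ ℚ} (h : f = g) (hf : lz n f) : lz n g := h ▸ hf

lemma lz_mono {n k : ℕ} {f : MvPowerSeries σ ℚ} (hk : k ≤ n) (hf : lz n f) : lz k f :=
  fun m hm => hf m (hm.trans hk)

lemma lz_add {n : ℕ} {f g : MvPowerSeries σ ℚ} (hf : lz n f) (hg : lz n g) : lz n (f + g) :=
  fun m hm => by rw [map_add, hf m hm, hg m hm, add_zero]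

lemma lz_sub {n : ℕ} {f g : MvPowerSeries σ ℚ} (hf : lz n f) (hg : lz n g) : lz n (f - g) :=
  fun m hm => by rw [map_sub, hf m hm, hg m hm, sub_zero]

lemma lz_sum {n : ℕ} {ι : Type*} (s : Finset ι) (F : ι → MvPowerSeries σ ℚ)
    (h : ∀ i ∈ s, lz n (F i)) : lz n (∑ i ∈ s, F i) :=
  fun m hm => by
    rw [map_sum]
    exact Finset.sum_eq_zero fun i hi => h i hi m hm

lemma lz_mul_right {n : ℕ} {g : MvPowerSeries σ ℚ} (f : MvPowerSeries σ ℚ)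
    (hg : lz n g) : lz n (f * g) := by
  intro m hm
  rw [coeff_mul]
  refine Finset.sum_eq_zero fun p hp => ?_
  rw [Finset.HasAntidiagonal.mem_antidiagonal] at hp
  have h2 : (p.2.sum fun _ e => e) ≤ n := by
    have := degsum_add p.1 p.2
    rw [hp] at this
    omega
  rw [hg p.2 h2, mul_zero]

lemma lz_mul_left {n : ℕ} {f : MvPowerSeries σ ℚ} (g : MvPowerSeries σ ℚ)
    (hf : lz n f) : lz n (f * g) := by
  intro m hm
  rw [coeff_mul]
  refine Finset.sum_eq_zero fun p hp => ?_
  rw [Finset.HasAntidiagonal.mem_antidiagonal] at hp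
  have h1 : (p.1.sum fun _ e => e) ≤ n := by
    have := degsum_add p.1 p.2
    rw [hp] at this
    omega
  rw [hf p.1 h1, zero_mul]

lemma lz_mul {a b : ℕ} {f g : MvPowerSeries σ ℚ} (hf : lz a f) (hg : lz b g) :
    lz (a + b + 1) (f * g) := by
  intro m hm
  rw [coeff_mul]
  refine Finset.sum_eq_zero fun p hp => ?_
  rw [Finset.HasAntidiagonal.mem_antidiagonal] at hp
  have hd := degsum_add p.1 p.2
  rw [hp] at hd
  by_cases h1 : (p.1.sum fun _ e => e) ≤ a
  · rw [hf p.1 h1, zero_mul]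
  · rw [hg p.2 (by omega), mul_zero]

lemma lz_monomial {n : ℕ} {d : σ →₀ ℕ} (h : n < d.sum fun _ e => e) (c : ℚ) :
    lz n (monomial d c) := by
  intro m hm
  rw [coeff_monomial, if_neg]
  rintro rfl
  omega

lemma lz_smul_X (c : ℚ) (i : σ) : lz 0 ((c • X i : MvPowerSeries σ ℚ)) := by
  intro m hm
  have : m = 0 := degsum_eq_zero (Nat.le_zero.mp hm)
  subst this
  rw [map_smul, smul_eq_mul, coeff_X, if_neg, mul_zero]
  intro h
  have := congrFun (congrArg (fun f : σ →₀ ℕ => (f : σ → ℕ)) h) i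
  simp at this

lemma lz_pow_zero {S : MvPowerSeries σ ℚ} (hS : lz 0 S) :
    ∀ k : ℕ, ∀ m : σ →₀ ℕ, (m.sum fun _ e => e) < k → MvPowerSeries.coeff m (S ^ k) = 0 := by
  intro k
  induction k with
  | zero => intro m hm; omega
  | succ k ih =>
    intro m hm
    rw [pow_succ, coeff_mul]
    refine Finset.sum_eq_zero fun p hp => ?_
    rw [Finset.HasAntidiagonal.mem_antidiagonal] at hp
    have hd := degsum_add p.1 p.2
    rw [hp] at hd
    by_cases h2 : (p.2.sum fun _ e => e) = 0
    · rw [hS p.2 (le_of_eq h2), mul_zero]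
    · rw [ih p.1 (by omega), zero_mul]

lemma coeff_mexp_le {S : MvPowerSeries σ ℚ} (hS : lz 0 S) (N : ℕ) (m : σ →₀ ℕ)
    (hm : (m.sum fun _ e => e) ≤ N) :
    MvPowerSeries.coeff m (mexp S) =
      ∑ k ∈ Finset.range (N + 1), ((k.factorial : ℚ))⁻¹ * MvPowerSeries.coeff m (S ^ k) := by
  have h0 : MvPowerSeries.coeff m (mexp S) =
      ∑ k ∈ Finset.range ((m.sum fun _ e => e) + 1),
        ((k.factorial : ℚ))⁻¹ * MvPowerSeries.coeff m (S ^ k) := rfl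
  rw [h0]
  refine Finset.sum_subset (by simp [Finset.range_subset]; omega) ?_
  intro k hk hk'
  simp only [Finset.mem_range] at hk hk'
  rw [lz_pow_zero hS k m (by omega), mul_zero]

lemma coeff_mexp_smul_X (c : ℚ) (i : σ) (m : σ →₀ ℕ) :
    MvPowerSeries.coeff m (mexp (c • X i)) =
      if m = Finsupp.single i (m i) then c ^ (m i) * (((m i).factorial : ℚ))⁻¹ else 0 := by
  have h0 : MvPowerSeries.coeff m (mexp (c • X i)) =
      ∑ k ∈ Finset.range ((m.sum fun _ e => e) + 1),
        ((k.factorial : ℚ))⁻¹ * MvPowerSeries.coeff m ((c • X i) ^ k) := rfl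
  rw [h0]
  have hx : ∀ k : ℕ, MvPowerSeries.coeff m ((c • X i) ^ k)
      = if m = Finsupp.single i k then c ^ k else 0 := by
    intro k
    rw [smul_pow, map_smul, X_pow_eq, coeff_monomial, smul_eq_mul]
    split_ifs <;> simp
  simp_rw [hx]
  have hcond : ∀ k : ℕ, (m = Finsupp.single i k) ↔ (m = Finsupp.single i (m i) ∧ k = m i) := by
    intro k
    constructor
    · intro h
      have hk : m i = k := by rw [h, Finsupp.single_eq_same]
      subst hk
      exact ⟨h, rfl⟩
    · rintro ⟨h, rfl⟩; exact h
  clear hcond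
  have hterm : ∀ k ∈ Finset.range ((m.sum fun _ e => e) + 1),
      (((k.factorial : ℚ))⁻¹ * if m = Finsupp.single i k then c ^ k else 0)
        = if k = m i then
            (if m = Finsupp.single i (m i) then ((k.factorial : ℚ))⁻¹ * c ^ k else 0) else 0 := by
    intro k _
    by_cases hk : k = m i
    · subst hk; simp only [if_pos rfl]; split_ifs <;> ring
    · rw [if_neg hk, if_neg, mul_zero]
      intro h'
      exact hk (by rw [h', Finsupp.single_eq_same])
  rw [Finset.sum_congr rfl hterm, Finset.sum_ite_eq'
    (Finset.range ((m.sum fun _ e => e) + 1)) (m i)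
    (fun k => if m = Finsupp.single i (m i) then ((k.factorial : ℚ))⁻¹ * c ^ k else 0)]
  rw [if_pos (Finset.mem_range.mpr (by have := apply_le_degsum m i; omega))]
  split_ifs <;> ring

/-- main univariate normal form lemma -/
lemma lz_mexp_smul_X (c : ℚ) (i : σ) :
    lz 4 (mexp (c • X i) - (1 + monomial (Finsupp.single i 1) c
      + monomial (Finsupp.single i 2) (c^2/2) + monomial (Finsupp.single i 3) (c^3/6)
      + monomial (Finsupp.single i 4) (c^4/24))) := by
  intro m hm
  rw [map_sub, coeff_mexp_smul_X, map_add, map_add, map_add, map_add, coeff_one,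
    coeff_monomial, coeff_monomial, coeff_monomial, coeff_monomial]
  by_cases h : m = Finsupp.single i (m i)
  · rw [if_pos h]
    have hn : m i ≤ 4 := le_trans (apply_le_degsum m i) hm
    have h0 : (m = 0) ↔ (m i = 0) := by
      constructor
      · intro h'; rw [h']; simp
      · intro h'; rw [h, h']; simp
    have hk : ∀ k : ℕ, k ≠ 0 → ((m = Finsupp.single i k) ↔ (m i = k)) := by
      intro k hk0
      constructor
      · intro h'; rw [h']; simp
      · intro h'; rw [h, h']
    simp only [h0, hk 1 one_ne_zero, hk 2 (by norm_num), hk 3 (by norm_num), hk 4 (by norm_num)]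
    set n := m i with hn'
    interval_cases n <;> (norm_num [Nat.factorial]; try ring)
  · have hne : ∀ k : ℕ, m ≠ Finsupp.single i k := by
      intro k h'
      apply h
      rw [h', Finsupp.single_eq_same]
    have hne0 : m ≠ 0 := by
      intro h'
      apply hne 0
      rw [h']; simp
    rw [if_neg h, if_neg hne0, if_neg (hne 1), if_neg (hne 2), if_neg (hne 3), if_neg (hne 4)]
    norm_num

/-- numerals in the power series ring are `C` of numerals -/
lemma ofNat_eq_C (n : ℕ) [n.AtLeastTwo] :
    (OfNat.ofNat n : MvPowerSeries σ ℚ) = C (OfNat.ofNat n) := (map_ofNat (C) n).symm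

lemma coeff_C_mul' (q : ℚ) (f : MvPowerSeries σ ℚ) (m : σ →₀ ℕ) :
    MvPowerSeries.coeff m (C q * f) = q * MvPowerSeries.coeff m f := by
  rw [← smul_eq_C_mul, map_smul, smul_eq_mul]

lemma coeff_ofNat_mul (n : ℕ) [n.AtLeastTwo] (f : MvPowerSeries σ ℚ) (m : σ →₀ ℕ) :
    MvPowerSeries.coeff m ((OfNat.ofNat n : MvPowerSeries σ ℚ) * f) =
      (OfNat.ofNat n : ℚ) * MvPowerSeries.coeff m f := by
  rw [ofNat_eq_C, coeff_C_mul']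

lemma coeff_ofNat (n : ℕ) [n.AtLeastTwo] (m : σ →₀ ℕ) :
    MvPowerSeries.coeff m (OfNat.ofNat n : MvPowerSeries σ ℚ) =
      if m = 0 then (OfNat.ofNat n : ℚ) else 0 := by
  rw [ofNat_eq_C, coeff_C]

lemma lz_of_ofNat_mul {k : ℕ} {n : ℕ} [n.AtLeastTwo] {f : MvPowerSeries σ ℚ}
    (h : lz k ((OfNat.ofNat n : MvPowerSeries σ ℚ) * f)) : lz k f := by
  intro m hm
  have := h m hm
  rw [coeff_ofNat_mul] at this
  have hn : (OfNat.ofNat n : ℚ) ≠ 0 := NeZero.ne' _ |>.symm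
  exact (mul_eq_zero.mp this).resolve_left hn

lemma eq_single_of_degsum {m : σ →₀ ℕ} {i : σ} (h : (m.sum fun _ e => e) = m i) :
    m = Finsupp.single i (m i) := by
  have h1 : Finsupp.single i (m i) + m.erase i = m := Finsupp.single_add_erase i m
  have h2 : ((m.erase i).sum fun _ e => e) = 0 := by
    have := degsum_add (Finsupp.single i (m i)) (m.erase i)
    rw [h1, degsum_single] at this
    omega
  calc m = Finsupp.single i (m i) + m.erase i := h1.symm
    _ = Finsupp.single i (m i) := by rw [degsum_eq_zero h2, add_zero]

/-- sinh normal form -/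
lemma lz_usinh (i : σ) :
    lz 4 ((mexp ((2:ℚ)⁻¹ • X i) - mexp (-((2:ℚ)⁻¹ • X i)))
      - (monomial (Finsupp.single i 1) 1 + monomial (Finsupp.single i 3) 24⁻¹)) := by
  have h1 := lz_mexp_smul_X (2⁻¹ : ℚ) i
  have h2 := lz_mexp_smul_X (-(2⁻¹) : ℚ) i
  rw [show ((-(2⁻¹) : ℚ) • X i : MvPowerSeries σ ℚ) = -((2:ℚ)⁻¹ • X i) by rw [neg_smul]] at h2
  have h3 := lz_sub h1 h2
  refine lz_congr ?_ h3
  have key : (1 + monomial (Finsupp.single i 1) (2⁻¹:ℚ)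
        + monomial (Finsupp.single i 2) ((2⁻¹:ℚ)^2/2) + monomial (Finsupp.single i 3) ((2⁻¹:ℚ)^3/6)
        + monomial (Finsupp.single i 4) ((2⁻¹:ℚ)^4/24))
      - (1 + monomial (Finsupp.single i 1) (-(2⁻¹):ℚ)
        + monomial (Finsupp.single i 2) ((-(2⁻¹):ℚ)^2/2) + monomial (Finsupp.single i 3) ((-(2⁻¹):ℚ)^3/6)
        + monomial (Finsupp.single i 4) ((-(2⁻¹):ℚ)^4/24))
      = monomial (Finsupp.single i 1) (1:ℚ) + monomial (Finsupp.single i 3) (24⁻¹:ℚ) := by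
    ext m
    simp only [ofNat_eq_C, coeff_C_mul', map_add, map_sub, coeff_C, coeff_one, coeff_monomial]
    by_cases h : m = Finsupp.single i (m i)
    · have h0 : (m = 0) ↔ (m i = 0) :=
        ⟨fun h' => by rw [h']; simp, fun h' => by rw [h, h']; simp⟩
      have hk : ∀ k : ℕ, k ≠ 0 → ((m = Finsupp.single i k) ↔ (m i = k)) :=
        fun k hk0 => ⟨fun h' => by rw [h']; simp, fun h' => by rw [h, h']⟩
      simp only [h0, hk 1 one_ne_zero, hk 2 (by norm_num), hk 3 (by norm_num), hk 4 (by norm_num)]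
      split_ifs <;> first | norm_num | omega
    · have hne : ∀ k : ℕ, m ≠ Finsupp.single i k := by
        intro k h'
        exact h (by rw [h', Finsupp.single_eq_same])
      have hne0 : m ≠ 0 := fun h' => hne 0 (by rw [h']; simp)
      simp only [if_neg h, if_neg hne0, if_neg (hne 1), if_neg (hne 2), if_neg (hne 3),
        if_neg (hne 4)]
      norm_num
  linear_combination -key

/-- cosh normal form (scaled by 192) -/
lemma lz_cosh (i : σ) :
    lz 4 (192 * (mexp ((2:ℚ)⁻¹ • X i) + mexp (-((2:ℚ)⁻¹ • X i)))
      - (384 + 48 * monomial (Finsupp.single i 2) 1 + monomial (Finsupp.single i 4) 1)) := by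
  have h1 := lz_mexp_smul_X (2⁻¹ : ℚ) i
  have h2 := lz_mexp_smul_X (-(2⁻¹) : ℚ) i
  rw [show ((-(2⁻¹) : ℚ) • X i : MvPowerSeries σ ℚ) = -((2:ℚ)⁻¹ • X i) by rw [neg_smul]] at h2
  have h3 := lz_add h1 h2
  have h4 := lz_mul_right (192 : MvPowerSeries σ ℚ) h3
  refine lz_congr ?_ h4
  have key : (192 : MvPowerSeries σ ℚ) *
      ((1 + monomial (Finsupp.single i 1) (2⁻¹:ℚ)
        + monomial (Finsupp.single i 2) ((2⁻¹:ℚ)^2/2) + monomial (Finsupp.single i 3) ((2⁻¹:ℚ)^3/6)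
        + monomial (Finsupp.single i 4) ((2⁻¹:ℚ)^4/24))
      + (1 + monomial (Finsupp.single i 1) (-(2⁻¹):ℚ)
        + monomial (Finsupp.single i 2) ((-(2⁻¹):ℚ)^2/2) + monomial (Finsupp.single i 3) ((-(2⁻¹):ℚ)^3/6)
        + monomial (Finsupp.single i 4) ((-(2⁻¹):ℚ)^4/24)))
      = 384 + 48 * monomial (Finsupp.single i 2) 1 + monomial (Finsupp.single i 4) 1 := by
    ext m
    simp only [ofNat_eq_C, coeff_C_mul', map_add, map_sub, coeff_C, coeff_one, coeff_monomial]
    by_cases h : m = Finsupp.single i (m i)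
    · have h0 : (m = 0) ↔ (m i = 0) :=
        ⟨fun h' => by rw [h']; simp, fun h' => by rw [h, h']; simp⟩
      have hk : ∀ k : ℕ, k ≠ 0 → ((m = Finsupp.single i k) ↔ (m i = k)) :=
        fun k hk0 => ⟨fun h' => by rw [h']; simp, fun h' => by rw [h, h']⟩
      simp only [h0, hk 1 one_ne_zero, hk 2 (by norm_num), hk 3 (by norm_num), hk 4 (by norm_num)]
      split_ifs <;> first | norm_num | omega
    · have hne : ∀ k : ℕ, m ≠ Finsupp.single i k := by
        intro k h'
        exact h (by rw [h', Finsupp.single_eq_same])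
      have hne0 : m ≠ 0 := fun h' => hne 0 (by rw [h']; simp)
      simp only [if_neg h, if_neg hne0, if_neg (hne 1), if_neg (hne 2), if_neg (hne 3),
        if_neg (hne 4)]
      norm_num
  linear_combination -key

/-- Chern character term normal form (scaled by 12) -/
lemma lz_ch (i : σ) :
    lz 4 (12 * (mexp (X i) + mexp (-X i))
      - (24 + 12 * monomial (Finsupp.single i 2) 1 + monomial (Finsupp.single i 4) 1)) := by
  have h1 := lz_mexp_smul_X (1 : ℚ) i
  have h2 := lz_mexp_smul_X (-1 : ℚ) i
  rw [show ((1 : ℚ) • X i : MvPowerSeries σ ℚ) = X i by rw [one_smul]] at h1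
  rw [show ((-1 : ℚ) • X i : MvPowerSeries σ ℚ) = -X i by rw [neg_smul, one_smul]] at h2
  have h3 := lz_add h1 h2
  have h4 := lz_mul_right (12 : MvPowerSeries σ ℚ) h3
  refine lz_congr ?_ h4
  have key : (12 : MvPowerSeries σ ℚ) *
      ((1 + monomial (Finsupp.single i 1) (1:ℚ)
        + monomial (Finsupp.single i 2) ((1:ℚ)^2/2) + monomial (Finsupp.single i 3) ((1:ℚ)^3/6)
        + monomial (Finsupp.single i 4) ((1:ℚ)^4/24))
      + (1 + monomial (Finsupp.single i 1) (-1:ℚ)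
        + monomial (Finsupp.single i 2) ((-1:ℚ)^2/2) + monomial (Finsupp.single i 3) ((-1:ℚ)^3/6)
        + monomial (Finsupp.single i 4) ((-1:ℚ)^4/24)))
      = 24 + 12 * monomial (Finsupp.single i 2) 1 + monomial (Finsupp.single i 4) 1 := by
    ext m
    simp only [ofNat_eq_C, coeff_C_mul', map_add, map_sub, coeff_C, coeff_one, coeff_monomial]
    by_cases h : m = Finsupp.single i (m i)
    · have h0 : (m = 0) ↔ (m i = 0) :=
        ⟨fun h' => by rw [h']; simp, fun h' => by rw [h, h']; simp⟩
      have hk : ∀ k : ℕ, k ≠ 0 → ((m = Finsupp.single i k) ↔ (m i = k)) :=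
        fun k hk0 => ⟨fun h' => by rw [h']; simp, fun h' => by rw [h, h']⟩
      simp only [h0, hk 1 one_ne_zero, hk 2 (by norm_num), hk 3 (by norm_num), hk 4 (by norm_num)]
      split_ifs <;> first | norm_num | omega
    · have hne : ∀ k : ℕ, m ≠ Finsupp.single i k := by
        intro k h'
        exact h (by rw [h', Finsupp.single_eq_same])
      have hne0 : m ≠ 0 := fun h' => hne 0 (by rw [h']; simp)
      simp only [if_neg h, if_neg hne0, if_neg (hne 1), if_neg (hne 2), if_neg (hne 3),
        if_neg (hne 4)]
      norm_num
  linear_combination -key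

lemma single_apply_add (i : σ) (a : ℕ) (m : σ →₀ ℕ) :
    (m + Finsupp.single i a) i = m i + a := by
  rw [Finsupp.add_apply, Finsupp.single_eq_same]

/-- extraction of the low-degree coefficients of the A-hat series from its defining equation -/
lemma lz_A {i : σ} {Ai : MvPowerSeries σ ℚ}
    (hAi : Ai * (mexp ((2:ℚ)⁻¹ • X i) - mexp (-((2:ℚ)⁻¹ • X i))) = X i) :
    lz 2 (24 * Ai - (24 - monomial (Finsupp.single i 2) 1)) := by
  have hmain : ∀ m : σ →₀ ℕ, (m.sum fun _ e => e) ≤ 4 →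
      (if Finsupp.single i 1 ≤ m then MvPowerSeries.coeff (m - Finsupp.single i 1) Ai * 1 else 0)
      + (if Finsupp.single i 3 ≤ m then
          MvPowerSeries.coeff (m - Finsupp.single i 3) Ai * 24⁻¹ else 0)
      = (if m = Finsupp.single i 1 then 1 else 0) := by
    intro m hm
    have hsplit : Ai * (mexp ((2:ℚ)⁻¹ • X i) - mexp (-((2:ℚ)⁻¹ • X i)))
        = Ai * monomial (Finsupp.single i 1) (1:ℚ)
          + Ai * monomial (Finsupp.single i 3) (24⁻¹:ℚ)
          + Ai * ((mexp ((2:ℚ)⁻¹ • X i) - mexp (-((2:ℚ)⁻¹ • X i)))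
              - (monomial (Finsupp.single i 1) 1 + monomial (Finsupp.single i 3) 24⁻¹)) := by
      ring
    have h1 := congrArg (MvPowerSeries.coeff m) (hsplit.symm.trans hAi)
    rw [map_add, map_add, coeff_mul_monomial, coeff_mul_monomial,
      lz_mul_right Ai (lz_usinh i) m hm, add_zero, coeff_X] at h1
    exact h1
  have hA0 : MvPowerSeries.coeff 0 Ai = 1 := by
    have h := hmain (Finsupp.single i 1) (by rw [degsum_single]; norm_num)
    rw [if_pos le_rfl, tsub_self, if_neg, if_pos rfl] at h
    · simpa using h
    · rw [Finsupp.single_le_iff, Finsupp.single_eq_same]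
      norm_num
  have hA1 : ∀ m' : σ →₀ ℕ, (m'.sum fun _ e => e) = 1 → MvPowerSeries.coeff m' Ai = 0 := by
    intro m' hm'
    have h := hmain (m' + Finsupp.single i 1)
      (by rw [degsum_add, degsum_single, hm']; norm_num)
    have hc3 : ¬(Finsupp.single i 3 ≤ m' + Finsupp.single i 1) := by
      rw [Finsupp.single_le_iff, single_apply_add]
      have := apply_le_degsum m' i
      omega
    have hceq : ¬(m' + Finsupp.single i 1 = Finsupp.single i 1) := by
      intro hc
      have := congrArg (fun f : σ →₀ ℕ => (f.sum fun _ e => e)) hc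
      simp only [degsum_add, degsum_single, hm'] at this
      omega
    rw [if_pos le_add_self, add_tsub_cancel_right, if_neg hc3, if_neg hceq] at h
    simpa using h
  have hA2 : ∀ m' : σ →₀ ℕ, (m'.sum fun _ e => e) = 2 → m' ≠ Finsupp.single i 2 →
      MvPowerSeries.coeff m' Ai = 0 := by
    intro m' hm' hne
    have h := hmain (m' + Finsupp.single i 1)
      (by rw [degsum_add, degsum_single, hm']; norm_num)
    have hc3 : ¬(Finsupp.single i 3 ≤ m' + Finsupp.single i 1) := by
      rw [Finsupp.single_le_iff, single_apply_add]
      intro hc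
      have h2 : m' i = 2 := by
        have := apply_le_degsum m' i
        omega
      exact hne (by rw [← h2]; exact eq_single_of_degsum (by omega))
    have hceq : ¬(m' + Finsupp.single i 1 = Finsupp.single i 1) := by
      intro hc
      have := congrArg (fun f : σ →₀ ℕ => (f.sum fun _ e => e)) hc
      simp only [degsum_add, degsum_single, hm'] at this
      omega
    rw [if_pos le_add_self, add_tsub_cancel_right, if_neg hc3, if_neg hceq] at h
    simpa using h
  have hA2' : MvPowerSeries.coeff (Finsupp.single i 2) Ai = -24⁻¹ := by
    have hm3 : Finsupp.single i 2 + Finsupp.single i 1 = Finsupp.single i 3 := by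
      rw [← Finsupp.single_add]
    have h := hmain (Finsupp.single i 2 + Finsupp.single i 1)
      (by rw [degsum_add, degsum_single, degsum_single]; norm_num)
    have hceq : ¬((Finsupp.single i 3 : σ →₀ ℕ) = Finsupp.single i 1) := by
      intro hc
      have := congrArg (fun f : σ →₀ ℕ => (f.sum fun _ e => e)) hc
      simp only [degsum_single] at this
      omega
    rw [if_pos le_add_self, add_tsub_cancel_right, hm3, if_pos le_rfl, tsub_self, hA0,
      if_neg hceq] at h
    linarith [h]
  intro m hm
  rw [map_sub, map_sub, coeff_ofNat_mul, coeff_ofNat, coeff_monomial]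
  have hn : (m.sum fun _ e => e) = 0 ∨ (m.sum fun _ e => e) = 1 ∨ (m.sum fun _ e => e) = 2 := by
    omega
  rcases hn with hn | hn | hn
  · rw [degsum_eq_zero hn, hA0 ,if_pos rfl, if_neg]
    · norm_num
    · intro hc
      have := congrArg (fun f : σ →₀ ℕ => (f.sum fun _ e => e)) hc.symm
      simp only [degsum_single] at this
      simp at this
  · rw [hA1 m hn, if_neg, if_neg]
    · norm_num
    · intro hc
      have := congrArg (fun f : σ →₀ ℕ => (f.sum fun _ e => e)) hc
      simp only [degsum_single] at this
      omega
    · intro hc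
      rw [hc] at hn
      simp at hn
  · by_cases hc : m = Finsupp.single i 2
    · rw [hc, hA2', if_pos rfl, if_neg]
      · norm_num
      · intro h0
        have := congrArg (fun f : σ →₀ ℕ => (f.sum fun _ e => e)) h0.symm
        simp only [degsum_single, Finsupp.sum_zero_index] at this
        omega
    · rw [hA2 m hn hc, if_neg hc, if_neg]
      · norm_num
      · intro h0
        rw [h0] at hn
        simp at hn

/-- multiplying two normal forms of shape `c·f ≡ c - F` -/
lemma lz_nf_mul {f g F G c d : MvPowerSeries σ ℚ}
    (hf : lz 2 (c * f - (c - F))) (hg : lz 2 (d * g - (d - G)))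
    (hF : lz 1 F) (hG : lz 1 G) :
    lz 2 ((c * d) * (f * g) - (c * d - d * F - c * G)) := by
  have key : (c * d) * (f * g) - (c * d - d * F - c * G)
      = F * G + (c - F) * (d * g - (d - G)) + (c * f - (c - F)) * (d * g) := by
    ring
  refine lz_congr key.symm ?_
  exact lz_add (lz_add (lz_mono (by norm_num) (lz_mul hF hG))
    (lz_mul_right _ hg)) (lz_mul_left _ hf)

end Anomaly

open Anomaly Finsupp Sum

/-- Corollary 1.5(2) with `ξ` trivial (eq. (1.40)/(1.46)): in degree 4 (form degree 8),
`{e^{(1/24)(p₁(TX)-p₁(W))}[Â(TX) det^{1/2}(2cosh((√-1/4π)R^W))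
   - Â(TX)(-2^{l-4} ch(W_ℂ) + 2^{l-3}(l+8))]}^{(8)} = 0`,
at the level of Chern roots `±xⱼ` for `T_ℂX` (`dim X = 8`) and `±yₖ` for `W_ℂ` (`rk W = 2l`).
`A j` is the Â-series of `xⱼ`, characterized by `A(x)(e^{x/2} - e^{-x/2}) = x`. -/
theorem anomaly_dim8_untwisted (l : ℕ)
    (A : Fin 4 → MvPowerSeries (Fin 4 ⊕ Fin l) ℚ)
    (hA : ∀ j, A j * (mexp ((2 : ℚ)⁻¹ • X (Sum.inl j)) -
        mexp (-((2 : ℚ)⁻¹ • X (Sum.inl j)))) = X (Sum.inl j))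
    (m : (Fin 4 ⊕ Fin l) →₀ ℕ) (hm : (m.sum fun _ e => e) = 4) :
    MvPowerSeries.coeff m
      (mexp ((24 : ℚ)⁻¹ • ((∑ j, X (Sum.inl j) ^ 2) - ∑ k, X (Sum.inr k) ^ 2)) *
        (∏ j, A j) *
        ((∏ k, (mexp ((2 : ℚ)⁻¹ • X (Sum.inr k)) + mexp (-((2 : ℚ)⁻¹ • X (Sum.inr k)))))
          + (2 : ℚ) ^ ((l : ℤ) - 4) • (∑ k, (mexp (X (Sum.inr k)) + mexp (-X (Sum.inr k))))
          - MvPowerSeries.C ((2 : ℚ) ^ ((l : ℤ) - 3) * ((l : ℚ) + 8))))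
    = 0 := by
  classical
  -- basic monomials
  set M2x : Fin 4 → MvPowerSeries (Fin 4 ⊕ Fin l) ℚ :=
    fun j => monomial (Finsupp.single (inl j) 2) 1 with hM2x
  set M2 : Fin l → MvPowerSeries (Fin 4 ⊕ Fin l) ℚ :=
    fun k => monomial (Finsupp.single (inr k) 2) 1 with hM2
  set M4 : Fin l → MvPowerSeries (Fin 4 ⊕ Fin l) ℚ :=
    fun k => monomial (Finsupp.single (inr k) 4) 1 with hM4
  have hlzM2x : ∀ j, lz 1 (M2x j) :=
    fun j => lz_monomial (by rw [degsum_single]; norm_num) 1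
  have hlzM2 : ∀ k, lz 1 (M2 k) :=
    fun k => lz_monomial (by rw [degsum_single]; norm_num) 1
  have hlzM4 : ∀ k, lz 3 (M4 k) :=
    fun k => lz_monomial (by rw [degsum_single]; norm_num) 1
  set Qx : MvPowerSeries (Fin 4 ⊕ Fin l) ℚ := ∑ j, M2x j with hQxdef
  set Q : MvPowerSeries (Fin 4 ⊕ Fin l) ℚ := ∑ k, M2 k with hQdef
  set Q4 : MvPowerSeries (Fin 4 ⊕ Fin l) ℚ := ∑ k, M4 k with hQ4def
  have hlzQx : lz 1 Qx := lz_sum _ _ fun j _ => hlzM2x j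
  have hlzQ : lz 1 Q := lz_sum _ _ fun k _ => hlzM2 k
  have hlzQ4 : lz 3 Q4 := lz_sum _ _ fun k _ => hlzM4 k
  -- ==================== the exponential factor ====================
  have hEexp : lz 2 (24 * mexp ((24 : ℚ)⁻¹ •
      ((∑ j, X (inl j) ^ 2) - ∑ k, (X (inr k) : MvPowerSeries (Fin 4 ⊕ Fin l) ℚ) ^ 2)) - (24 + Qx - Q)) := by
    have hT : ((∑ j, X (inl j) ^ 2) - ∑ k, (X (inr k) : MvPowerSeries (Fin 4 ⊕ Fin l) ℚ) ^ 2) = Qx - Q := by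
      rw [hQxdef, hQdef, hM2x, hM2]
      simp_rw [X_pow_eq]
    rw [hT]
    have hlzT : lz 1 (Qx - Q) := lz_sub hlzQx hlzQ
    have hS0 : lz 0 ((24 : ℚ)⁻¹ • (Qx - Q)) := lz_smul _ (lz_mono (by norm_num) hlzT)
    intro mm hmm
    rw [map_sub, coeff_ofNat_mul, coeff_mexp_le hS0 2 mm hmm]
    rw [Finset.sum_range_succ, Finset.sum_range_succ, Finset.sum_range_one]
    have hsq : MvPowerSeries.coeff mm (((24 : ℚ)⁻¹ • (Qx - Q)) ^ 2) = 0 := by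
      rw [smul_pow, map_smul, pow_two (Qx - Q), lz_mul hlzT hlzT mm (hmm.trans (by norm_num)),
        smul_zero]
    rw [hsq]
    simp only [ofNat_eq_C, coeff_C_mul', pow_zero, pow_one, map_smul, map_sub, map_add,
      coeff_C, coeff_one, smul_eq_mul]
    split_ifs <;> · norm_num [Nat.factorial]; try ring
  -- ==================== the A-hat factor ====================
  have hprodA : lz 2 (24 ^ 4 * ∏ j, A j - (24 ^ 4 - 24 ^ 3 * Qx)) := by
    have h0 := lz_A (hA 0)
    have h1 := lz_A (hA 1)
    have h2 := lz_A (hA 2)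
    have h3 := lz_A (hA 3)
    have h01 := lz_nf_mul h0 h1 (hlzM2x 0) (hlzM2x 1)
    have h01' : lz 2 ((24 * 24) * (A 0 * A 1)
        - (24 * 24 - (24 * M2x 0 + 24 * M2x 1))) := lz_congr (by ring) h01
    have hF01 : lz 1 (24 * M2x 0 + 24 * M2x 1) :=
      lz_add (lz_mul_right _ (hlzM2x 0)) (lz_mul_right _ (hlzM2x 1))
    have h012 := lz_nf_mul h01' h2 hF01 (hlzM2x 2)
    have h012' : lz 2 ((24 * 24 * 24) * (A 0 * A 1 * A 2)
        - (24 * 24 * 24 - (24 * (24 * M2x 0 + 24 * M2x 1) + (24 * 24) * M2x 2))) := by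
      refine lz_congr ?_ h012
      ring
    have hF012 : lz 1 (24 * (24 * M2x 0 + 24 * M2x 1) + (24 * 24) * M2x 2) :=
      lz_add (lz_mul_right _ hF01) (lz_mul_right _ (hlzM2x 2))
    have h0123 := lz_nf_mul h012' h3 hF012 (hlzM2x 3)
    refine lz_congr ?_ h0123
    rw [Fin.prod_univ_four, hQxdef, Fin.sum_univ_four]
    ring
  -- ==================== combined prefactor ====================
  have hE : lz 2 (24 ^ 5 * (mexp ((24 : ℚ)⁻¹ •
      ((∑ j, X (inl j) ^ 2) - ∑ k, (X (inr k) : MvPowerSeries (Fin 4 ⊕ Fin l) ℚ) ^ 2)) * ∏ j, A j)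
      - (24 ^ 5 - 24 ^ 4 * Q)) := by
    have hEexp' : lz 2 (24 * mexp ((24 : ℚ)⁻¹ •
        ((∑ j, X (inl j) ^ 2) - ∑ k, (X (inr k) : MvPowerSeries (Fin 4 ⊕ Fin l) ℚ) ^ 2))
        - (24 - (Q - Qx))) := lz_congr (by ring) hEexp
    have hcomb := lz_nf_mul hEexp' hprodA (lz_sub hlzQ hlzQx) (lz_mul_right _ hlzQx)
    refine lz_congr ?_ hcomb
    ring
  -- ==================== the cosh product ====================
  set g : Fin l → MvPowerSeries (Fin 4 ⊕ Fin l) ℚ :=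
    fun k => mexp ((2 : ℚ)⁻¹ • X (inr k)) + mexp (-((2 : ℚ)⁻¹ • X (inr k))) with hg
  have hP : ∀ s : Finset (Fin l), lz 4 (384 * ∏ k ∈ s, g k
      - 2 ^ s.card * (384 + 48 * (∑ k ∈ s, M2 k) + 3 * ((∑ k ∈ s, M2 k) * (∑ k ∈ s, M2 k))
        - 2 * (∑ k ∈ s, M4 k))) := by
    intro s
    induction s using Finset.induction_on with
    | empty =>
      refine lz_congr (Eq.symm ?_) (lz_zero 4)
      rw [Finset.prod_empty, Finset.sum_empty, Finset.sum_empty, Finset.card_empty]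
      ring
    | @insert a s ha ih =>
      have hga : lz 4 (192 * g a - (384 + 48 * M2 a + M4 a)) := lz_cosh (inr a)
      have hMM : M2 a * M2 a = M4 a := by
        rw [hM2, hM4, monomial_mul_monomial, ← Finsupp.single_add]
        norm_num
      have hJUNK : lz 4 (144 * (M2 a * ((∑ k ∈ s, M2 k) * (∑ k ∈ s, M2 k)))
          - 96 * (M2 a * (∑ k ∈ s, M4 k)) + 48 * (M4 a * (∑ k ∈ s, M2 k))
          + 3 * (M4 a * ((∑ k ∈ s, M2 k) * (∑ k ∈ s, M2 k)))
          - 2 * (M4 a * (∑ k ∈ s, M4 k))) := by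
        have hQs : lz 1 (∑ k ∈ s, M2 k) := lz_sum _ _ fun k _ => hlzM2 k
        have hQ4s : lz 3 (∑ k ∈ s, M4 k) := lz_sum _ _ fun k _ => hlzM4 k
        refine lz_sub (lz_add (lz_add (lz_sub
          (lz_mul_right _ (lz_mono (by norm_num) (lz_mul (hlzM2 a) (lz_mul hQs hQs))))
          (lz_mul_right _ (lz_mono (by norm_num) (lz_mul (hlzM2 a) hQ4s))))
          (lz_mul_right _ (lz_mono (by norm_num) (lz_mul (hlzM4 a) hQs))))
          (lz_mul_right _ (lz_mono (by norm_num) (lz_mul (hlzM4 a) (lz_mul hQs hQs)))))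
          (lz_mul_right _ (lz_mono (by norm_num) (lz_mul (hlzM4 a) hQ4s)))
      have main : 192 * (384 * ∏ k ∈ insert a s, g k)
          - 192 * (2 ^ (insert a s).card * (384 + 48 * (∑ k ∈ insert a s, M2 k)
            + 3 * ((∑ k ∈ insert a s, M2 k) * (∑ k ∈ insert a s, M2 k))
            - 2 * (∑ k ∈ insert a s, M4 k)))
          = (192 * g a - (384 + 48 * M2 a + M4 a)) * (384 * ∏ k ∈ s, g k)
            + (384 + 48 * M2 a + M4 a) * (384 * ∏ k ∈ s, g k
              - 2 ^ s.card * (384 + 48 * (∑ k ∈ s, M2 k)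
                + 3 * ((∑ k ∈ s, M2 k) * (∑ k ∈ s, M2 k)) - 2 * (∑ k ∈ s, M4 k)))
            + (2:MvPowerSeries (Fin 4 ⊕ Fin l) ℚ) ^ s.card *
              (144 * (M2 a * ((∑ k ∈ s, M2 k) * (∑ k ∈ s, M2 k)))
                - 96 * (M2 a * (∑ k ∈ s, M4 k)) + 48 * (M4 a * (∑ k ∈ s, M2 k))
                + 3 * (M4 a * ((∑ k ∈ s, M2 k) * (∑ k ∈ s, M2 k)))
                - 2 * (M4 a * (∑ k ∈ s, M4 k))) := by
        rw [Finset.prod_insert ha, Finset.sum_insert ha, Finset.sum_insert ha,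
          Finset.card_insert_of_notMem ha]
        linear_combination (-1152 * (2:MvPowerSeries (Fin 4 ⊕ Fin l) ℚ) ^ s.card) * hMM
      have hlz192 : lz 4 (192 * (384 * ∏ k ∈ insert a s, g k
          - 2 ^ (insert a s).card * (384 + 48 * (∑ k ∈ insert a s, M2 k)
            + 3 * ((∑ k ∈ insert a s, M2 k) * (∑ k ∈ insert a s, M2 k))
            - 2 * (∑ k ∈ insert a s, M4 k)))) := by
        have hRHS := lz_add (lz_add
          (lz_mul_left (384 * ∏ k ∈ s, g k) hga)
          (lz_mul_right (384 + 48 * M2 a + M4 a) ih))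
          (lz_mul_right ((2:MvPowerSeries (Fin 4 ⊕ Fin l) ℚ) ^ s.card) hJUNK)
        refine lz_congr ?_ hRHS
        conv_rhs => rw [mul_sub]
        exact main.symm
      exact lz_of_ofNat_mul hlz192
  -- specialize to the full product
  have hPuniv : lz 4 (384 * ∏ k, g k - 2 ^ l * (384 + 48 * Q + 3 * (Q * Q) - 2 * Q4)) := by
    have := hP Finset.univ
    rwa [Finset.card_univ, Fintype.card_fin, ← hQdef, ← hQ4def] at this
  -- ==================== the Chern character sum ====================
  have hCh : lz 4 (12 * ∑ k, (mexp (X (inr k)) + mexp (-X (inr k)) : MvPowerSeries (Fin 4 ⊕ Fin l) ℚ)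
      - ((l : MvPowerSeries (Fin 4 ⊕ Fin l) ℚ) * 24 + 12 * Q + Q4)) := by
    have h := lz_sum Finset.univ
      (fun k : Fin l => 12 * (mexp (X (inr k)) + mexp (-X (inr k)) : MvPowerSeries (Fin 4 ⊕ Fin l) ℚ)
        - (24 + 12 * M2 k + M4 k))
      (fun k _ => lz_ch (inr k))
    refine lz_congr ?_ h
    simp only [hQdef, hQ4def, Finset.sum_sub_distrib, Finset.sum_add_distrib, Finset.mul_sum,
      mul_add, Finset.sum_const, Finset.card_univ, Fintype.card_fin, nsmul_eq_mul]
  -- ==================== the bracket ====================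
  have hzq : (2:ℚ) ≠ 0 := by norm_num
  have h1 : (384 : MvPowerSeries (Fin 4 ⊕ Fin l) ℚ) * C ((2:ℚ) ^ ((l : ℤ) - 4))
      = 24 * 2 ^ l := by
    have hq : (384:ℚ) * (2:ℚ) ^ ((l : ℤ) - 4) = 24 * 2 ^ l := by
      rw [zpow_sub₀ hzq, zpow_natCast]
      norm_num
      ring
    rw [ofNat_eq_C, ← map_mul, hq]
    simp only [map_mul, map_pow, map_ofNat]
  have h2 : (384 : MvPowerSeries (Fin 4 ⊕ Fin l) ℚ) * C ((2:ℚ) ^ ((l : ℤ) - 3) * ((l:ℚ) + 8))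
      = 2 ^ l * ((l : MvPowerSeries (Fin 4 ⊕ Fin l) ℚ) * 48) + 2 ^ l * 384 := by
    have hq : (384:ℚ) * ((2:ℚ) ^ ((l : ℤ) - 3) * ((l:ℚ) + 8))
        = 2 ^ l * ((l:ℚ) * 48) + 2 ^ l * 384 := by
      rw [zpow_sub₀ hzq, zpow_natCast]
      field_simp
      ring
    rw [ofNat_eq_C, ← map_mul, hq]
    simp only [map_add, map_mul, map_pow, map_natCast, map_ofNat]
  rw [show (2:ℚ) ^ ((l : ℤ) - 4) • (∑ k, (mexp (X (inr k)) + mexp (-X (inr k))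
      : MvPowerSeries (Fin 4 ⊕ Fin l) ℚ))
    = C ((2:ℚ) ^ ((l : ℤ) - 4)) *
        (∑ k, (mexp (X (inr k)) + mexp (-X (inr k)))) from smul_eq_C_mul _ _]
  set B : MvPowerSeries (Fin 4 ⊕ Fin l) ℚ := (∏ k, g k)
      + C ((2:ℚ) ^ ((l : ℤ) - 4)) * (∑ k, (mexp (X (inr k)) + mexp (-X (inr k))))
      - C ((2:ℚ) ^ ((l : ℤ) - 3) * ((l:ℚ) + 8)) with hBdef
  have hB : lz 4 (384 * B - 2 ^ l * (72 * Q + 3 * (Q * Q))) := by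
    have hsum := lz_add hPuniv
      (lz_mul_right ((2:MvPowerSeries (Fin 4 ⊕ Fin l) ℚ) * 2 ^ l) hCh)
    refine lz_congr ?_ hsum
    rw [hBdef]
    linear_combination -(∑ k, (mexp (X (inr k)) + mexp (-X (inr k))
      : MvPowerSeries (Fin 4 ⊕ Fin l) ℚ)) * h1 + h2
  -- ==================== final assembly ====================
  set E : MvPowerSeries (Fin 4 ⊕ Fin l) ℚ := mexp ((24 : ℚ)⁻¹ •
      ((∑ j, X (inl j) ^ 2) - ∑ k, (X (inr k) : MvPowerSeries (Fin 4 ⊕ Fin l) ℚ) ^ 2)) * ∏ j, A j with hEdef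
  -- key identity
  have key : (24:MvPowerSeries (Fin 4 ⊕ Fin l) ℚ) ^ 5 * (384 * (E * B))
      = 2 ^ l * (24 ^ 5 * 72) * Q - 2 ^ l * (3 * 24 ^ 4) * (Q * (Q * Q))
        + (24 ^ 5 * E - (24 ^ 5 - 24 ^ 4 * Q)) * (2 ^ l * (72 * Q + 3 * (Q * Q))
            + (384 * B - 2 ^ l * (72 * Q + 3 * (Q * Q))))
        + (24 ^ 5 - 24 ^ 4 * Q) * (384 * B - 2 ^ l * (72 * Q + 3 * (Q * Q))) := by
    ring
  have hc := congrArg (MvPowerSeries.coeff m) key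
  -- coefficient of LHS
  have hLHS : (24:MvPowerSeries (Fin 4 ⊕ Fin l) ℚ) ^ 5 * (384 * (E * B))
      = C (24 ^ 5 * 384) * (E * B) := by
    have hcst : (C) ((24:ℚ) ^ 5 * 384)
        = (24:MvPowerSeries (Fin 4 ⊕ Fin l) ℚ) ^ 5 * 384 := by
      simp only [map_mul, map_pow, map_ofNat]
    rw [hcst]
    ring
  rw [hLHS, coeff_C_mul'] at hc
  -- coefficients of RHS pieces vanish
  have hQc : MvPowerSeries.coeff m Q = 0 := by
    rw [hQdef, map_sum]
    refine Finset.sum_eq_zero fun k _ => ?_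
    rw [hM2, coeff_monomial, if_neg]
    intro hc'
    rw [hc'] at hm
    rw [degsum_single] at hm
    omega
  have hQmul : MvPowerSeries.coeff m (2 ^ l * (24 ^ 5 * 72) * Q) = 0 := by
    have : ((2:MvPowerSeries (Fin 4 ⊕ Fin l) ℚ) ^ l * (24 ^ 5 * 72)) * Q
        = C (2 ^ l * (24 ^ 5 * 72)) * Q := by
      have hcst : (C) ((2:ℚ) ^ l * (24 ^ 5 * 72))
          = (2:MvPowerSeries (Fin 4 ⊕ Fin l) ℚ) ^ l * (24 ^ 5 * 72) := by
        simp only [map_mul, map_pow, map_ofNat]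
      rw [hcst]
    rw [this, coeff_C_mul', hQc, mul_zero]
  have hQ3 : MvPowerSeries.coeff m (2 ^ l * (3 * 24 ^ 4) * (Q * (Q * Q))) = 0 :=
    lz_mul_right _ (lz_mono (by norm_num) (lz_mul hlzQ (lz_mul hlzQ hlzQ))) m (le_of_eq hm)
  have hcross1 : MvPowerSeries.coeff m ((24 ^ 5 * E - (24 ^ 5 - 24 ^ 4 * Q)) *
      (2 ^ l * (72 * Q + 3 * (Q * Q))
        + (384 * B - 2 ^ l * (72 * Q + 3 * (Q * Q))))) = 0 := by
    have hlz1 : lz 1 (2 ^ l * (72 * Q + 3 * (Q * Q))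
        + (384 * B - 2 ^ l * (72 * Q + 3 * (Q * Q)))) := by
      refine lz_add (lz_mul_right _ (lz_add (lz_mul_right _ hlzQ)
        (lz_mul_right _ (lz_mono (by norm_num) (lz_mul hlzQ hlzQ)))))
        (lz_mono (by norm_num) hB)
    exact lz_mul hE hlz1 m (le_of_eq hm)
  have hcross2 : MvPowerSeries.coeff m ((24 ^ 5 - 24 ^ 4 * Q) *
      (384 * B - 2 ^ l * (72 * Q + 3 * (Q * Q)))) = 0 :=
    lz_mul_right _ hB m (le_of_eq hm)
  rw [map_add, map_add, map_sub, hQmul, hQ3, hcross1, hcross2] at hc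
  norm_num at hc
  exact hc
end

section
/- (Corollary 1.5(3), twisted case; eq. (1.43), equivalently (1.47) with signs as in (1.43).) Let l be a natural number. In the formal power series ring ℚ[[x₁, …, x₆, y₁, …, y_l, u]], the homogeneous component of total degree 6 of exp((1/24)·(Σ_{j=1}^{6} xⱼ² - Σ_{k=1}^{l} yₖ²)) · [ Π_{j=1}^{6} A(xⱼ) · Π_{k=1}^{l} 2cosh(yₖ/2) · cosh(u/2)^{-2} - Π_{j=1}^{6} A(xⱼ) · cosh(u/2) · ( 2^{l-3}·Σ_{k=1}^{l}(e^{yₖ} + e^{-yₖ}) - 2^{l-2}·(l-4) - 3·2^{l-3}·(e^{u} + e^{-u} - 2) ) ] equals 0. (This is the Chern-root form of the twisted 12-dimensional generalized anomaly cancellation formula, with no condition on first Pontryagin forms.) -/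
open MvPowerSeries

/-!
Work modulo power series of order `≥ 7`, so that only terms of degree `≤ 6` matter.
The `Â`-factor and the exponential twist only contribute through degree 2: since
`A(x) ≡ 1 - x² / 24`, one has `e^{(p₁(TX) - p₁(W)) / 24} Â(TX) ≡ 1 - p₁(W) / 24` modulo order 4.
Expanding `cosh (y / 2)`, `1 / cosh (u / 2)` and `e^{± y}` to order 6, with the product over the
Chern roots of `W` written in the power sums `∑ y²`, `∑ y⁴`, `∑ y⁶`, the bracket is
`≡ 2^{l-7} (1 + p₁(W) / 24) H` with `H = p₁(W)² - 2 ∑ y⁴ - 6 p₁(W) u² + 15 u⁴` homogeneous of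
degree 4. The two degree-2 corrections cancel, so the whole expression is `≡ 2^{l-7} H`
modulo order 7, and `H` has no component of degree 6.
-/

open Finset

namespace MvPowerSeries

section OrderIdeal

variable {σ R : Type*} [CommRing R]

def orderIdeal (d : ℕ) : Ideal (MvPowerSeries σ R) where
  carrier := {f | (d : ℕ∞) ≤ f.order}
  add_mem' hf hg := (le_min hf hg).trans min_order_le_add
  zero_mem' := by simp
  smul_mem' c _ hf := hf.trans (le_add_self.trans le_order_mul)

theorem mem_orderIdeal {d : ℕ} {f : MvPowerSeries σ R} :
    f ∈ orderIdeal d ↔ (d : ℕ∞) ≤ f.order :=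
  Iff.rfl

theorem mem_orderIdeal_iff_coeff {d : ℕ} {f : MvPowerSeries σ R} :
    f ∈ orderIdeal d ↔ ∀ n : σ →₀ ℕ, n.degree < d → coeff n f = 0 :=
  ⟨fun hf _ hn => coeff_of_lt_order ((Nat.cast_lt.mpr hn).trans_le hf), nat_le_order⟩

theorem coeff_eq_zero_of_mem_orderIdeal {d : ℕ} {f : MvPowerSeries σ R} (hf : f ∈ orderIdeal d)
    {n : σ →₀ ℕ} (hn : n.degree < d) : coeff n f = 0 :=
  mem_orderIdeal_iff_coeff.mp hf n hn

theorem orderIdeal_antitone : Antitone (orderIdeal (σ := σ) (R := R)) := by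
  intro _ _ h _ hf
  exact mem_orderIdeal.mpr ((Nat.cast_le.mpr h).trans hf)

theorem mul_mem_orderIdeal {a b : ℕ} {f g : MvPowerSeries σ R} (hf : f ∈ orderIdeal a)
    (hg : g ∈ orderIdeal b) : f * g ∈ orderIdeal (a + b) := by
  change ((a + b : ℕ) : ℕ∞) ≤ (f * g).order
  push_cast
  exact (add_le_add hf hg).trans le_order_mul

theorem orderIdeal_pow_le (d k : ℕ) :
    orderIdeal (σ := σ) (R := R) d ^ k ≤ orderIdeal (k * d) := by
  induction k with
  | zero => exact fun f _ => show ((0 * d : ℕ) : ℕ∞) ≤ f.order by simp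
  | succ k ih =>
    rw [pow_succ, Nat.succ_mul]
    exact (Ideal.mul_mono_left ih).trans
      (Ideal.mul_le.mpr fun _ hf _ hg => mul_mem_orderIdeal hf hg)

theorem pow_mem_orderIdeal {d : ℕ} {f : MvPowerSeries σ R} (hf : f ∈ orderIdeal d) (k : ℕ) :
    f ^ k ∈ orderIdeal (k * d) :=
  orderIdeal_pow_le d k (Ideal.pow_mem_pow hf k)

theorem mem_orderIdeal_one_iff {f : MvPowerSeries σ R} :
    f ∈ orderIdeal 1 ↔ constantCoeff f = 0 := by
  simpa [orderIdeal] using one_le_order_iff_constCoeff_eq_zero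

theorem X_mem_orderIdeal_one (i : σ) : (X i : MvPowerSeries σ R) ∈ orderIdeal 1 :=
  mem_orderIdeal_one_iff.mpr (constantCoeff_X i)

theorem mem_orderIdeal_of_X_mul_mem {d : ℕ} {i : σ} {f : MvPowerSeries σ R}
    (h : X i * f ∈ orderIdeal (d + 1)) : f ∈ orderIdeal d := by
  classical
  refine mem_orderIdeal_iff_coeff.mpr fun n hn => ?_
  have := coeff_eq_zero_of_mem_orderIdeal h (n := Finsupp.single i 1 + n) (by simp; omega)
  rwa [X_def, coeff_add_monomial_mul, one_mul] at this

theorem IsHomogeneous.mem_orderIdeal {d : ℕ} {f : MvPowerSeries σ R} (hf : f.IsHomogeneous d) :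
    f ∈ orderIdeal d :=
  mem_orderIdeal_iff_coeff.mpr fun _ hn => hf.coeff_eq_zero hn.ne

theorem IsHomogeneous.C_mul {d : ℕ} {f : MvPowerSeries σ R} (hf : f.IsHomogeneous d) (c : R) :
    (C c * f).IsHomogeneous d :=
  fun hd => hf (right_ne_zero_of_mul (by rwa [coeff_C_mul] at hd))

theorem map_orderIdeal_pow_eq_bot {n d k : ℕ} (h : n ≤ k * d) :
    (orderIdeal (σ := σ) (R := R) d).map (Ideal.Quotient.mk (orderIdeal n)) ^ k = ⊥ := by
  rw [← Ideal.map_pow, Ideal.map_eq_bot_iff_le_ker, Ideal.mk_ker]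
  exact (orderIdeal_pow_le d k).trans (orderIdeal_antitone h)

end OrderIdeal

end MvPowerSeries

section TruncatedPolynomials

/- `K` stands for the series of order `≥ 2` modulo those of order `≥ 7`, so `K ^ 4 = ⊥` and the
identities below are polynomial identities up to terms of degree `≥ 8`. -/

variable {S : Type*} [CommRing S] {K : Ideal S}

theorem Ideal.mul_mem_pow_add {x y : S} {i j : ℕ} (hx : x ∈ K ^ i) (hy : y ∈ K ^ j) :
    x * y ∈ K ^ (i + j) :=
  pow_add K i j ▸ Ideal.mul_mem_mul hx hy

theorem Ideal.mul_eq_zero_of_pow_eq_bot {x y : S} {i j : ℕ} (hx : x ∈ K ^ i) (hy : y ∈ K ^ j)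
    (hK : K ^ (i + j) = ⊥) : x * y = 0 := by
  simpa [hK] using Ideal.mul_mem_pow_add hx hy

theorem Ideal.mul_eq_zero_of_sq_eq_bot {x y : S} (hK : K ^ 2 = ⊥) (hx : x ∈ K) (hy : y ∈ K) :
    x * y = 0 :=
  Ideal.mul_eq_zero_of_pow_eq_bot (i := 1) (j := 1) (by simpa using hx) (by simpa using hy) hK

/-- `46080 cosh (y / 2)` up to degree 6, as a polynomial in `s = y²`. -/
def coshHalfTrunc (s : S) : S := 46080 + 5760 * s + 120 * s ^ 2 + s ^ 3

/-- `46080 / cosh (y / 2)` up to degree 6, as a polynomial in `s = y²`. -/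
def sechHalfTrunc (s : S) : S := 46080 - 5760 * s + 600 * s ^ 2 - 61 * s ^ 3

/-- `46080 ∏ₖ cosh (yₖ / 2)` up to degree 6, in the power sums `a = ∑ yₖ²`, `b = ∑ yₖ⁴`,
`c = ∑ yₖ⁶`: it is `46080 exp (a / 8 - b / 192 + c / 2880)` truncated, because
`log cosh (y / 2) = y² / 8 - y⁴ / 192 + y⁶ / 2880 + ⋯`. -/
def prodCoshHalfTrunc (a b c : S) : S :=
  46080 + 5760 * a - 240 * b + 16 * c + 360 * a ^ 2 - 30 * (a * b) + 15 * a ^ 3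

theorem coshHalfTrunc_mul_prodCoshHalfTrunc (hK : K ^ 4 = ⊥) {s a b c : S} (hs : s ∈ K)
    (ha : a ∈ K) (hb : b ∈ K ^ 2) (hc : c ∈ K ^ 3) :
    coshHalfTrunc s * prodCoshHalfTrunc a b c =
      46080 * prodCoshHalfTrunc (a + s) (b + s ^ 2) (c + s ^ 3) := by
  have hs₁ : s ∈ K ^ 1 := (pow_one K).symm ▸ hs
  have ha₁ : a ∈ K ^ 1 := (pow_one K).symm ▸ ha
  have : a ^ 3 * s = 0 := Ideal.mul_eq_zero_of_pow_eq_bot (Ideal.pow_mem_pow ha 3) hs₁ hK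
  have : a ^ 2 * s ^ 2 = 0 :=
    Ideal.mul_eq_zero_of_pow_eq_bot (Ideal.pow_mem_pow ha 2) (Ideal.pow_mem_pow hs 2) hK
  have : a * s ^ 3 = 0 := Ideal.mul_eq_zero_of_pow_eq_bot ha₁ (Ideal.pow_mem_pow hs 3) hK
  have : a * s * b = 0 := Ideal.mul_eq_zero_of_pow_eq_bot (Ideal.mul_mem_pow_add ha₁ hs₁) hb hK
  have : s ^ 2 * b = 0 := Ideal.mul_eq_zero_of_pow_eq_bot (Ideal.pow_mem_pow hs 2) hb hK
  have : s * c = 0 := Ideal.mul_eq_zero_of_pow_eq_bot hs₁ hc hK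
  unfold coshHalfTrunc prodCoshHalfTrunc
  grind

theorem prodCoshHalfTrunc_mul_sechHalfTrunc_sq_sub (hK : K ^ 4 = ⊥) {a b c w : S} (ha : a ∈ K)
    (hb : b ∈ K ^ 2) (hc : c ∈ K ^ 3) (hw : w ∈ K) :
    prodCoshHalfTrunc a b c * sechHalfTrunc w ^ 2 - 2 * 46080 * coshHalfTrunc w *
      (23040 + 2880 * a + 240 * b + 8 * c - 8640 * w - 720 * w ^ 2 - 24 * w ^ 3) =
      15 * 46080 ^ 2 * (24 + a) * (a ^ 2 - 2 * b - 6 * a * w + 15 * w ^ 2) := by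
  have hw₁ : w ∈ K ^ 1 := (pow_one K).symm ▸ hw
  have ha₁ : a ∈ K ^ 1 := (pow_one K).symm ▸ ha
  have : a ^ 3 * w = 0 := Ideal.mul_eq_zero_of_pow_eq_bot (Ideal.pow_mem_pow ha 3) hw₁ hK
  have : a ^ 2 * w ^ 2 = 0 :=
    Ideal.mul_eq_zero_of_pow_eq_bot (Ideal.pow_mem_pow ha 2) (Ideal.pow_mem_pow hw 2) hK
  have : a * w ^ 3 = 0 := Ideal.mul_eq_zero_of_pow_eq_bot ha₁ (Ideal.pow_mem_pow hw 3) hK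
  have : w * w ^ 3 = 0 := Ideal.mul_eq_zero_of_pow_eq_bot hw₁ (Ideal.pow_mem_pow hw 3) hK
  have : a * w * b = 0 := Ideal.mul_eq_zero_of_pow_eq_bot (Ideal.mul_mem_pow_add ha₁ hw₁) hb hK
  have : w ^ 2 * b = 0 := Ideal.mul_eq_zero_of_pow_eq_bot (Ideal.pow_mem_pow hw 2) hb hK
  have : w * c = 0 := Ideal.mul_eq_zero_of_pow_eq_bot hw₁ hc hK
  unfold coshHalfTrunc prodCoshHalfTrunc sechHalfTrunc
  grind

theorem prod_one_add_eq_one_add_sum (hK : K ^ 2 = ⊥) {ι : Type*} (I : Finset ι) {g : ι → S}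
    (hg : ∀ j ∈ I, g j ∈ K) : ∏ j ∈ I, (1 + g j) = 1 + ∑ j ∈ I, g j := by
  classical
  induction I using Finset.induction_on with
  | empty => simp
  | insert a I ha ih =>
    rw [prod_insert ha, sum_insert ha, ih fun j hj => hg j (mem_insert_of_mem hj)]
    have : g a * ∑ j ∈ I, g j = 0 := Ideal.mul_eq_zero_of_sq_eq_bot hK
      (hg a (mem_insert_self a I)) (Ideal.sum_mem _ fun j hj => hg j (mem_insert_of_mem hj))
    linear_combination this

variable [Algebra ℚ S]

theorem prod_eq_prodCoshHalfTrunc (hK : K ^ 4 = ⊥) {ι : Type*} (I : Finset ι) {s t : ι → S}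
    (hs : ∀ k ∈ I, s k ∈ K) (ht : ∀ k ∈ I, 23040 * t k = coshHalfTrunc (s k)) :
    46080 * ∏ k ∈ I, t k =
      2 ^ #I * prodCoshHalfTrunc (∑ k ∈ I, s k) (∑ k ∈ I, s k ^ 2) (∑ k ∈ I, s k ^ 3) := by
  classical
  induction I using Finset.induction_on with
  | empty => simp [prodCoshHalfTrunc]
  | insert a I ha ih =>
    have hsI : ∀ k ∈ I, s k ∈ K := fun k hk => hs k (mem_insert_of_mem hk)
    have step := coshHalfTrunc_mul_prodCoshHalfTrunc hK (hs a (mem_insert_self a I))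
      (Ideal.sum_mem _ hsI) (Ideal.sum_mem _ fun k hk => Ideal.pow_mem_pow (hsI k hk) 2)
      (Ideal.sum_mem _ fun k hk => Ideal.pow_mem_pow (hsI k hk) 3)
    rw [prod_insert ha, sum_insert ha, sum_insert ha, sum_insert ha, card_insert_of_notMem ha,
      add_comm (s a), add_comm (s a ^ 2), add_comm (s a ^ 3)]
    linear_combination (norm := algebra) t a * ih hsI (fun k hk => ht k (mem_insert_of_mem hk)) +
      (23040⁻¹ : ℚ) • (2 ^ #I * (prodCoshHalfTrunc (∑ k ∈ I, s k) (∑ k ∈ I, s k ^ 2)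
        (∑ k ∈ I, s k ^ 3) * ht a (mem_insert_self a I) + step))

theorem mul_eq_sechHalfTrunc (hK : K ^ 4 = ⊥) {w C V : S} (hw : w ∈ K)
    (hC : 46080 * C = coshHalfTrunc w) (hV : V * C = 1) : 46080 * V = sechHalfTrunc w := by
  have hw₄ : w ^ 4 = 0 := by simpa [hK] using Ideal.pow_mem_pow hw 4
  unfold coshHalfTrunc sechHalfTrunc at *
  linear_combination (norm := algebra) (46080⁻¹ : ℚ) •
    (-(V * (46080 - 5760 * w + 600 * w ^ 2 - 61 * w ^ 3)) * hC +
      46080 * (46080 - 5760 * w + 600 * w ^ 2 - 61 * w ^ 3) * hV +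
      V * (285120 + 6720 * w + 61 * w ^ 2) * hw₄)

theorem twistedBracket_eq_of_trunc (hK : K ^ 4 = ⊥) {a b c w T P C V Z : S} (ha : a ∈ K)
    (hb : b ∈ K ^ 2) (hc : c ∈ K ^ 3) (hw : w ∈ K) (hP : 46080 * P = T * prodCoshHalfTrunc a b c)
    (hC : 46080 * C = coshHalfTrunc w) (hV : 46080 * V = sechHalfTrunc w)
    (hZ : 23040 * Z =
      T * (23040 + 2880 * a + 240 * b + 8 * c - 8640 * w - 720 * w ^ 2 - 24 * w ^ 3)) :
    3072 * (P * V ^ 2 - C * Z) = (24 + a) * (T * (a ^ 2 - 2 * b - 6 * a * w + 15 * w ^ 2)) := by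
  have key := prodCoshHalfTrunc_mul_sechHalfTrunc_sq_sub hK ha hb hc hw
  linear_combination (norm := algebra) ((46080 : ℚ) ^ 3)⁻¹ • (3072 * ((46080 * V) ^ 2 * hP +
    T * prodCoshHalfTrunc a b c * (46080 * V + sechHalfTrunc w) * hV -
    2 * 46080 * 23040 * Z * hC - 2 * 46080 * coshHalfTrunc w * hZ + T * key))

end TruncatedPolynomials

namespace MvPowerSeries

variable {σ : Type*}

local notation:max "π[" n "]" => Ideal.Quotient.mk (orderIdeal (σ := σ) (R := ℚ) n)

theorem mexp_sub_sum_mem_orderIdeal {S : MvPowerSeries σ ℚ} (hS : S ∈ orderIdeal 1) (n : ℕ) :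
    mexp S - ∑ k ∈ range n, (k.factorial : ℚ)⁻¹ • S ^ k ∈ orderIdeal n := by
  refine mem_orderIdeal_iff_coeff.mpr fun m hm => ?_
  rw [map_sub, map_sum, sub_eq_zero]
  simp only [coeff_smul]
  refine sum_subset (range_subset_range.mpr hm) fun k hk hk' => ?_
  have hmk : m.degree < k * 1 := by simp only [mem_range] at hk hk'; omega
  rw [coeff_eq_zero_of_mem_orderIdeal (pow_mem_orderIdeal hS k) hmk, mul_zero]

theorem mk_smul {I : Ideal (MvPowerSeries σ ℚ)} (c : ℚ) (f : MvPowerSeries σ ℚ) :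
    Ideal.Quotient.mk I (c • f) = c • Ideal.Quotient.mk I f :=
  map_smul (Ideal.Quotient.mkₐ ℚ I) c f

theorem mk_mexp {S : MvPowerSeries σ ℚ} (hS : S ∈ orderIdeal 1) (n : ℕ) :
    π[n] (mexp S) = ∑ k ∈ range n, (k.factorial : ℚ)⁻¹ • π[n] S ^ k := by
  rw [Ideal.Quotient.eq.mpr (mexp_sub_sum_mem_orderIdeal hS n)]
  simp only [map_sum, mk_smul, map_pow]

theorem constantCoeff_mexp (S : MvPowerSeries σ ℚ) : constantCoeff (mexp S) = 1 := by
  rw [← coeff_zero_eq_constantCoeff_apply]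
  change ∑ k ∈ range ((0 : σ →₀ ℕ).sum (fun _ e => e) + 1), _ = 1
  simp

section Expansions

variable {f : MvPowerSeries σ ℚ}

theorem mk_mexp_add_mexp_neg_half (hf : f ∈ orderIdeal 1) :
    23040 * π[7] (mexp ((2 : ℚ)⁻¹ • f) + mexp (-((2 : ℚ)⁻¹ • f))) =
      coshHalfTrunc (π[7] f ^ 2) := by
  rw [← neg_smul, map_add, mk_mexp (Submodule.smul_of_tower_mem _ _ hf),
    mk_mexp (Submodule.smul_of_tower_mem _ _ hf)]
  simp only [sum_range_succ, sum_range_zero, Nat.factorial, mk_smul, coshHalfTrunc]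
  algebra

theorem mk_mexp_add_mexp_neg (hf : f ∈ orderIdeal 1) :
    360 * π[7] (mexp f + mexp (-f)) = 720 + 360 * π[7] f ^ 2 + 30 * π[7] f ^ 4 + π[7] f ^ 6 := by
  rw [map_add, mk_mexp hf, mk_mexp (neg_mem hf)]
  simp only [sum_range_succ, sum_range_zero, Nat.factorial, map_neg]
  algebra

theorem mk_mexp_sub_mexp_neg_half (hf : f ∈ orderIdeal 1) :
    π[5] (mexp ((2 : ℚ)⁻¹ • f) - mexp (-((2 : ℚ)⁻¹ • f))) =
      π[5] f + (24 : ℚ)⁻¹ • π[5] f ^ 3 := by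
  rw [← neg_smul, map_sub, mk_mexp (Submodule.smul_of_tower_mem _ _ hf),
    mk_mexp (Submodule.smul_of_tower_mem _ _ hf)]
  simp only [sum_range_succ, sum_range_zero, Nat.factorial, mk_smul]
  algebra

theorem mk_mexp_of_mem_orderIdeal_two (hf : f ∈ orderIdeal 2) : π[4] (mexp f) = 1 + π[4] f := by
  have hsq : π[4] f ^ 2 = 0 := by
    rw [← map_pow, Ideal.Quotient.eq_zero_iff_mem]
    exact pow_mem_orderIdeal hf 2
  have hcube : π[4] f ^ 3 = 0 := by rw [pow_succ, hsq, zero_mul]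
  rw [mk_mexp (orderIdeal_antitone (by norm_num) hf)]
  simp [sum_range_succ, hsq, hcube]

theorem mk_mcosh_half (hf : f ∈ orderIdeal 1) :
    46080 * π[7] (mcosh ((2 : ℚ)⁻¹ • f)) = coshHalfTrunc (π[7] (f ^ 2)) := by
  rw [mcosh, mk_smul, map_pow, ← mk_mexp_add_mexp_neg_half hf]
  algebra

theorem mk_inv_mcosh_half (hf : f ∈ orderIdeal 1) :
    46080 * π[7] (mcosh ((2 : ℚ)⁻¹ • f))⁻¹ = sechHalfTrunc (π[7] (f ^ 2)) := by
  have hcosh : constantCoeff (mcosh ((2 : ℚ)⁻¹ • f)) ≠ 0 := by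
    simp [mcosh, constantCoeff_mexp]
  have hK := map_orderIdeal_pow_eq_bot (σ := σ) (R := ℚ) (n := 7) (d := 2) (k := 4) (by norm_num)
  have hf₂ : f ^ 2 ∈ orderIdeal 2 := pow_mem_orderIdeal hf 2
  refine mul_eq_sechHalfTrunc hK (Ideal.mem_map_of_mem _ hf₂) (mk_mcosh_half hf) ?_
  rw [← map_mul, MvPowerSeries.inv_mul_cancel _ hcosh, map_one]

end Expansions

theorem mk_prod_mexp_add_mexp_neg_half {ι : Type*} (I : Finset ι) {y : ι → MvPowerSeries σ ℚ}
    (hy : ∀ k ∈ I, y k ∈ orderIdeal 1) :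
    46080 * π[7] (∏ k ∈ I, (mexp ((2 : ℚ)⁻¹ • y k) + mexp (-((2 : ℚ)⁻¹ • y k)))) =
      2 ^ #I * prodCoshHalfTrunc (π[7] (∑ k ∈ I, y k ^ 2)) (π[7] (∑ k ∈ I, y k ^ 4))
        (π[7] (∑ k ∈ I, y k ^ 6)) := by
  have hK := map_orderIdeal_pow_eq_bot (σ := σ) (R := ℚ) (n := 7) (d := 2) (k := 4) (by norm_num)
  have hy₂ : ∀ k ∈ I, y k ^ 2 ∈ orderIdeal 2 := fun k hk => pow_mem_orderIdeal (hy k hk) 2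
  have := prod_eq_prodCoshHalfTrunc hK I (s := fun k => π[7] (y k ^ 2))
    (t := fun k => π[7] (mexp ((2 : ℚ)⁻¹ • y k) + mexp (-((2 : ℚ)⁻¹ • y k))))
    (fun k hk => Ideal.mem_map_of_mem _ (hy₂ k hk))
    (fun k hk => by simpa only [map_pow] using mk_mexp_add_mexp_neg_half (hy k hk))
  simpa only [map_prod, map_sum, ← map_pow, ← pow_mul] using this

theorem mk_twistingClass {ι : Type*} (I : Finset ι) {y : ι → MvPowerSeries σ ℚ}
    (hy : ∀ k ∈ I, y k ∈ orderIdeal 1) {u : MvPowerSeries σ ℚ} (hu : u ∈ orderIdeal 1) :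
    23040 * π[7] ((2 : ℚ) ^ ((#I : ℤ) - 3) • ∑ k ∈ I, (mexp (y k) + mexp (-y k))
        - C ((2 : ℚ) ^ ((#I : ℤ) - 2) * ((#I : ℚ) - 4))
        - (3 * (2 : ℚ) ^ ((#I : ℤ) - 3)) • (mexp u + mexp (-u) - 2)) =
      2 ^ #I * (23040 + 2880 * π[7] (∑ k ∈ I, y k ^ 2) + 240 * π[7] (∑ k ∈ I, y k ^ 4) +
        8 * π[7] (∑ k ∈ I, y k ^ 6) - 8640 * π[7] (u ^ 2) - 720 * π[7] (u ^ 2) ^ 2 -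
        24 * π[7] (u ^ 2) ^ 3) := by
  have hch : 360 * π[7] (∑ k ∈ I, (mexp (y k) + mexp (-y k))) =
      720 * #I + 360 * π[7] (∑ k ∈ I, y k ^ 2) + 30 * π[7] (∑ k ∈ I, y k ^ 4) +
        π[7] (∑ k ∈ I, y k ^ 6) := by
    simp only [map_sum, mul_sum, map_pow]
    rw [sum_congr rfl fun k hk => mk_mexp_add_mexp_neg (hy k hk)]
    simp [sum_add_distrib]
    ring
  have hu' := mk_mexp_add_mexp_neg hu
  have hC : ∀ q : ℚ, C q = q • (1 : MvPowerSeries σ ℚ) := fun q => by rw [smul_eq_C_mul, mul_one]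
  have h₃ : (2 : ℚ) ^ ((#I : ℤ) - 3) = 2 ^ #I / 8 := by
    rw [zpow_sub₀ two_ne_zero, zpow_natCast]; norm_num
  have h₂ : (2 : ℚ) ^ ((#I : ℤ) - 2) = 2 ^ #I / 4 := by
    rw [zpow_sub₀ two_ne_zero, zpow_natCast]; norm_num
  simp only [map_sub, mk_smul, hC, map_one, h₃, h₂, map_ofNat, map_pow] at hu' ⊢
  -- the sums are generalized so that `algebra` does not unfold them when comparing atoms
  generalize π[7] (∑ k ∈ I, (mexp (y k) + mexp (-y k))) = ch at hch ⊢
  generalize π[7] (∑ k ∈ I, y k ^ 2) = p₁ at hch ⊢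
  generalize π[7] (∑ k ∈ I, y k ^ 4) = p₂ at hch ⊢
  generalize π[7] (∑ k ∈ I, y k ^ 6) = p₃ at hch ⊢
  linear_combination (norm := algebra) ((8 : ℚ) * 2 ^ #I) • hch - ((24 : ℚ) * 2 ^ #I) • hu'

theorem twistedBracket_sub_mem_orderIdeal {ι : Type*} (I : Finset ι)
    {y : ι → MvPowerSeries σ ℚ} (hy : ∀ k ∈ I, y k ∈ orderIdeal 1) {u : MvPowerSeries σ ℚ}
    (hu : u ∈ orderIdeal 1) :
    3072 * ((∏ k ∈ I, (mexp ((2 : ℚ)⁻¹ • y k) + mexp (-((2 : ℚ)⁻¹ • y k)))) *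
          (mcosh ((2 : ℚ)⁻¹ • u))⁻¹ ^ 2 -
        mcosh ((2 : ℚ)⁻¹ • u) *
          ((2 : ℚ) ^ ((#I : ℤ) - 3) • ∑ k ∈ I, (mexp (y k) + mexp (-y k))
            - C ((2 : ℚ) ^ ((#I : ℤ) - 2) * ((#I : ℚ) - 4))
            - (3 * (2 : ℚ) ^ ((#I : ℤ) - 3)) • (mexp u + mexp (-u) - 2))) -
      (24 + ∑ k ∈ I, y k ^ 2) * (2 ^ #I *
        ((∑ k ∈ I, y k ^ 2) ^ 2 - 2 * ∑ k ∈ I, y k ^ 4 - 6 * (∑ k ∈ I, y k ^ 2) * u ^ 2 +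
          15 * (u ^ 2) ^ 2)) ∈ orderIdeal 7 := by
  have hK := map_orderIdeal_pow_eq_bot (σ := σ) (R := ℚ) (n := 7) (d := 2) (k := 4) (by norm_num)
  have hpow : ∀ j : ℕ, π[7] (∑ k ∈ I, y k ^ (2 * j)) ∈ (orderIdeal 2).map π[7] ^ j := by
    intro j
    simp only [map_sum, pow_mul, map_pow]
    exact Ideal.sum_mem _ fun k hk => Ideal.pow_mem_pow
      (by simpa using Ideal.mem_map_of_mem π[7] (pow_mem_orderIdeal (hy k hk) 2)) j
  have key := twistedBracket_eq_of_trunc hK (by simpa using hpow 1) (by simpa using hpow 2)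
    (by simpa using hpow 3) (Ideal.mem_map_of_mem _ (pow_mem_orderIdeal hu 2))
    (mk_prod_mexp_add_mexp_neg_half I hy) (mk_mcosh_half hu) (mk_inv_mcosh_half hu)
    (mk_twistingClass I hy hu)
  refine Ideal.Quotient.eq.mp ?_
  simpa only [map_mul, map_pow, map_sub, map_add, map_ofNat] using key

theorem ahat_sub_mem_orderIdeal_four {A : MvPowerSeries σ ℚ} {i : σ}
    (hA : A * (mexp ((2 : ℚ)⁻¹ • X i) - mexp (-((2 : ℚ)⁻¹ • X i))) = X i) :
    A - (1 - (24 : ℚ)⁻¹ • X i ^ 2) ∈ orderIdeal 4 := by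
  have hX := X_mem_orderIdeal_one (R := ℚ) i
  have hX₃ : X i ^ 3 ∈ orderIdeal 3 := pow_mem_orderIdeal hX 3
  set r := mexp ((2 : ℚ)⁻¹ • X i) - mexp (-((2 : ℚ)⁻¹ • X i)) - (X i + (24 : ℚ)⁻¹ • X i ^ 3)
  have hr : r ∈ orderIdeal 5 := by
    refine Ideal.Quotient.eq.mp ?_
    rw [mk_mexp_sub_mexp_neg_half hX, map_add, mk_smul, map_pow]
  -- cancelling `X i` twice: first `A ≡ 1` modulo order 2, then the claim modulo order 4
  have hA₁ : A - 1 ∈ orderIdeal 2 := by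
    refine mem_orderIdeal_of_X_mul_mem (i := i) ?_
    have e : X i * (A - 1) = -(A * r) - (24 : ℚ)⁻¹ • (A * X i ^ 3) := by
      linear_combination (norm := algebra) hA
    rw [e]
    exact sub_mem (neg_mem (Ideal.mul_mem_left _ _ (orderIdeal_antitone (by norm_num) hr)))
      (Submodule.smul_of_tower_mem _ _ (Ideal.mul_mem_left _ _ hX₃))
  refine mem_orderIdeal_of_X_mul_mem (i := i) ?_
  have e : X i * (A - (1 - (24 : ℚ)⁻¹ • X i ^ 2)) =
      -(A * r) - (24 : ℚ)⁻¹ • ((A - 1) * X i ^ 3) := by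
    linear_combination (norm := algebra) hA
  rw [e]
  exact sub_mem (neg_mem (Ideal.mul_mem_left _ _ hr))
    (Submodule.smul_of_tower_mem _ _ (mul_mem_orderIdeal (a := 2) (b := 3) hA₁ hX₃))

theorem mexp_mul_prod_ahat_sub_mem_orderIdeal_four {ι : Type*} (I : Finset ι) (e : ι → σ)
    {A : ι → MvPowerSeries σ ℚ}
    (hA : ∀ j ∈ I, A j * (mexp ((2 : ℚ)⁻¹ • X (e j)) - mexp (-((2 : ℚ)⁻¹ • X (e j)))) = X (e j))
    {q : MvPowerSeries σ ℚ} (hq : q ∈ orderIdeal 2) :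
    mexp ((24 : ℚ)⁻¹ • (∑ j ∈ I, X (e j) ^ 2 - q)) * ∏ j ∈ I, A j - (1 - (24 : ℚ)⁻¹ • q) ∈
      orderIdeal 4 := by
  have hK := map_orderIdeal_pow_eq_bot (σ := σ) (R := ℚ) (n := 4) (d := 2) (k := 2) (by norm_num)
  have hsq : ∀ j, X (e j) ^ 2 ∈ orderIdeal (σ := σ) (R := ℚ) 2 :=
    fun j => pow_mem_orderIdeal (X_mem_orderIdeal_one _) 2
  have hp : ∑ j ∈ I, X (e j) ^ 2 ∈ orderIdeal (σ := σ) (R := ℚ) 2 :=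
    Ideal.sum_mem _ fun j _ => hsq j
  have hE :=
    mk_mexp_of_mem_orderIdeal_two (Submodule.smul_of_tower_mem _ (24 : ℚ)⁻¹ (sub_mem hp hq))
  have hP : π[4] (∏ j ∈ I, A j) = 1 + ∑ j ∈ I, π[4] (-(24 : ℚ)⁻¹ • X (e j) ^ 2) := by
    rw [map_prod, ← prod_one_add_eq_one_add_sum hK I fun j _ =>
      Ideal.mem_map_of_mem π[4] (Submodule.smul_of_tower_mem _ _ (hsq j))]
    refine prod_congr rfl fun j hj => ?_
    rw [Ideal.Quotient.eq.mpr (ahat_sub_mem_orderIdeal_four (hA j hj)), map_sub, map_one,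
      neg_smul, map_neg, sub_eq_add_neg]
  have hpp : π[4] (∑ j ∈ I, X (e j) ^ 2) * π[4] (∑ j ∈ I, X (e j) ^ 2) = 0 :=
    Ideal.mul_eq_zero_of_sq_eq_bot hK (Ideal.mem_map_of_mem π[4] hp) (Ideal.mem_map_of_mem π[4] hp)
  have hpq : π[4] (∑ j ∈ I, X (e j) ^ 2) * π[4] q = 0 :=
    Ideal.mul_eq_zero_of_sq_eq_bot hK (Ideal.mem_map_of_mem π[4] hp) (Ideal.mem_map_of_mem π[4] hq)
  refine Ideal.Quotient.eq.mp ?_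
  rw [map_mul, hE, hP, ← map_sum, ← smul_sum]
  simp only [map_sub, map_one, mk_smul]
  generalize π[4] (∑ j ∈ I, X (e j) ^ 2) = p at hpp hpq ⊢
  linear_combination (norm := algebra) (576⁻¹ : ℚ) • (hpq - hpp)

theorem isHomogeneous_quarticForm {ι : Type*} (I : Finset ι) (y : ι → σ) (v : σ) :
    ((∑ k ∈ I, X (y k) ^ 2) ^ 2 - 2 * ∑ k ∈ I, X (y k) ^ 4 -
      6 * (∑ k ∈ I, X (y k) ^ 2) * X v ^ 2 + 15 * (X v ^ 2) ^ 2 :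
        MvPowerSeries σ ℚ).IsHomogeneous 4 := by
  set φ : MvPolynomial σ ℚ := (∑ k ∈ I, MvPolynomial.X (y k) ^ 2) ^ 2 -
    2 * ∑ k ∈ I, MvPolynomial.X (y k) ^ 4 -
    6 * (∑ k ∈ I, MvPolynomial.X (y k) ^ 2) * MvPolynomial.X v ^ 2 +
    15 * (MvPolynomial.X v ^ 2) ^ 2
  have hφ : φ.IsHomogeneous 4 := by
    have h₂ := MvPolynomial.IsHomogeneous.sum (R := ℚ) I _ 2 fun k _ =>
      MvPolynomial.isHomogeneous_X_pow (y k) 2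
    have h₄ := MvPolynomial.IsHomogeneous.sum (R := ℚ) I _ 4 fun k _ =>
      MvPolynomial.isHomogeneous_X_pow (y k) 4
    have hv := MvPolynomial.isHomogeneous_X_pow (R := ℚ) v 2
    have hc : ∀ n : ℕ, (n : MvPolynomial σ ℚ).IsHomogeneous 0 := fun n => by
      simpa using MvPolynomial.isHomogeneous_C σ (n : ℚ)
    exact (((h₂.pow 2).sub ((hc 2).mul h₄)).sub (((hc 6).mul h₂).mul hv)).add
      ((hc 15).mul (hv.pow 2))
  have hcoe : (∑ k ∈ I, X (y k) ^ 2) ^ 2 - 2 * ∑ k ∈ I, X (y k) ^ 4 -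
      6 * (∑ k ∈ I, X (y k) ^ 2) * X v ^ 2 + 15 * (X v ^ 2) ^ 2 =
        MvPolynomial.coeToMvPowerSeries.ringHom (σ := σ) (R := ℚ) φ := by
    simp only [φ, map_add, map_sub, map_mul, map_pow, map_sum, map_ofNat]
    simp [MvPolynomial.coeToMvPowerSeries.ringHom_apply]
  rw [hcoe, MvPolynomial.coeToMvPowerSeries.ringHom_apply]
  intro d hd
  rw [MvPolynomial.coeff_coe] at hd
  exact hφ hd

theorem coeff_mul_eq_zero_of_congr {F B H q : MvPowerSeries σ ℚ} {m : σ →₀ ℕ}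
    (hm : m.degree = 6) (hq : q ∈ orderIdeal 2) (hH : H.IsHomogeneous 4)
    (hF : F - (1 - (24 : ℚ)⁻¹ • q) ∈ orderIdeal 4) (hB : B - (24 + q) * H ∈ orderIdeal 7) :
    coeff m (F * B) = 0 := by
  have hH₄ := hH.mem_orderIdeal
  have hB₄ : B ∈ orderIdeal 4 := by
    simpa using add_mem (orderIdeal_antitone (by norm_num) hB) (Ideal.mul_mem_left _ (24 + q) hH₄)
  have e : F * B - 24 * H = (F - (1 - (24 : ℚ)⁻¹ • q)) * B +
      (1 - (24 : ℚ)⁻¹ • q) * (B - (24 + q) * H) - (24 : ℚ)⁻¹ • (q ^ 2 * H) := by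
    algebra
  have h : F * B - 24 * H ∈ orderIdeal 7 := by
    rw [e]
    refine sub_mem (add_mem (orderIdeal_antitone (by norm_num) (mul_mem_orderIdeal hF hB₄))
      (Ideal.mul_mem_left _ _ hB)) (Submodule.smul_of_tower_mem _ _ ?_)
    exact orderIdeal_antitone (by norm_num) (mul_mem_orderIdeal (pow_mem_orderIdeal hq 2) hH₄)
  have h₆ := coeff_eq_zero_of_mem_orderIdeal h (n := m) (by omega)
  rwa [map_sub, ← map_ofNat C 24, coeff_C_mul, hH.coeff_eq_zero (by omega), mul_zero,
    sub_zero] at h₆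

end MvPowerSeries

/-- Corollary 1.5(3), twisted case (eq. (1.43)/(1.47)): in degree 6 (form degree 12),
`{e^{(1/24)(p₁(TX)-p₁(W))}[Â(TX) det^{1/2}(2cosh((√-1/4π)R^W))/cosh²(c/2)
   - Â(TX) cosh(c/2)(2^{l-3} ch(W_ℂ) - 2^{l-2}(l-4) - 3·2^{l-3}(e^c + e^{-c} - 2))]}^{(12)} = 0`,
at the level of Chern roots `±xⱼ` for `T_ℂX` (`dim X = 12`), `±yₖ` for `W_ℂ` (`rk W = 2l`),
with `u` the Euler form of `ξ`. `A j` is the Â-series of `xⱼ`, and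
`(mcosh ((2:ℚ)⁻¹ • u))⁻¹` is the multiplicative inverse of the unit power series `cosh(u/2)`. -/
theorem anomaly_dim12_twisted (l : ℕ)
    (A : Fin 6 → MvPowerSeries ((Fin 6 ⊕ Fin l) ⊕ Unit) ℚ)
    (hA : ∀ j, A j * (mexp ((2 : ℚ)⁻¹ • X (Sum.inl (Sum.inl j))) -
        mexp (-((2 : ℚ)⁻¹ • X (Sum.inl (Sum.inl j))))) = X (Sum.inl (Sum.inl j)))
    (m : ((Fin 6 ⊕ Fin l) ⊕ Unit) →₀ ℕ) (hm : (m.sum fun _ e => e) = 6) :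
    MvPowerSeries.coeff m
      (mexp ((24 : ℚ)⁻¹ •
          ((∑ j, X (Sum.inl (Sum.inl j)) ^ 2) - ∑ k, X (Sum.inl (Sum.inr k)) ^ 2)) *
        ((∏ j, A j) *
            (∏ k, (mexp ((2 : ℚ)⁻¹ • X (Sum.inl (Sum.inr k))) +
              mexp (-((2 : ℚ)⁻¹ • X (Sum.inl (Sum.inr k)))))) *
            ((mcosh ((2 : ℚ)⁻¹ • X (Sum.inr ())))⁻¹) ^ 2
          - (∏ j, A j) * mcosh ((2 : ℚ)⁻¹ • X (Sum.inr ())) *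
            ((2 : ℚ) ^ ((l : ℤ) - 3) •
                (∑ k, (mexp (X (Sum.inl (Sum.inr k))) + mexp (-X (Sum.inl (Sum.inr k)))))
              - MvPowerSeries.C (R := ℚ) ((2 : ℚ) ^ ((l : ℤ) - 2) * ((l : ℚ) - 4))
              - (3 * (2 : ℚ) ^ ((l : ℤ) - 3)) •
                (mexp (X (Sum.inr ())) + mexp (-X (Sum.inr ())) - 2))))
    = 0 := by
  have hp₁ : (∑ k, X (Sum.inl (Sum.inr k)) ^ 2 : MvPowerSeries ((Fin 6 ⊕ Fin l) ⊕ Unit) ℚ) ∈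
      orderIdeal 2 :=
    Ideal.sum_mem _ fun k _ => pow_mem_orderIdeal (X_mem_orderIdeal_one _) 2
  have hF := mexp_mul_prod_ahat_sub_mem_orderIdeal_four (univ : Finset (Fin 6))
    (fun j => Sum.inl (Sum.inl j)) (fun j _ => hA j) hp₁
  have hB := twistedBracket_sub_mem_orderIdeal (σ := (Fin 6 ⊕ Fin l) ⊕ Unit)
    (univ : Finset (Fin l)) (y := fun k => X (Sum.inl (Sum.inr k)))
    (fun k _ => X_mem_orderIdeal_one _) (X_mem_orderIdeal_one (Sum.inr ()))
  rw [Finset.card_fin] at hB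
  have hH : IsHomogeneous _ 4 := IsHomogeneous.C_mul (isHomogeneous_quarticForm
    (σ := (Fin 6 ⊕ Fin l) ⊕ Unit) univ (fun k => Sum.inl (Sum.inr k)) (Sum.inr ())) ((2 : ℚ) ^ l)
  rw [map_pow, map_ofNat] at hH
  have h := coeff_mul_eq_zero_of_congr hm hp₁ hH hF hB
  refine (mul_eq_zero.mp (?_ : (3072 : ℚ) * _ = 0)).resolve_left (by norm_num)
  rw [← coeff_C_mul, ← h, map_ofNat]
  congr 1
  ring
end

section
/- (Han–Zhang twisted 12-dimensional miraculous cancellation formula, eq. (0.6) with W = TX, at the level of Chern roots.) In the formal power series ring ℚ[[x₁, …, x₆, u]], the homogeneous component of total degree 6 of Π_{j=1}^{6} (2cosh(xⱼ/2)·A(xⱼ)) · cosh(u/2)^{-2} - cosh(u/2) · ( 8·Π_{j=1}^{6} A(xⱼ) · Σ_{j=1}^{6}(e^{xⱼ} + e^{-xⱼ}) - 32·Π_{j=1}^{6} A(xⱼ) - 24·Π_{j=1}^{6} A(xⱼ)·(e^{u} + e^{-u} - 2) ) equals 0. (This is the Chern-root form of {L̂(TX)/cosh²(c/2)}^{(12)}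 = {[8Â(TX)ch(T_ℂX) - 32Â(TX) - 24Â(TX)(e^c + e^{-c} - 2)]cosh(c/2)}^{(12)} on a 12-dimensional manifold X, where c is the Euler form of a rank-2 oriented bundle ξ.) -/
open MvPowerSeries

/-!
Every factor in the formula is an even power series in a single one of the variables `xⱼ`, `u`.
Writing each as a series in `yⱼ = xⱼ²`, `v = u²` exhibits the whole expression as `expand 2 G`,
so its coefficients at monomials with an odd exponent vanish and its degree-6 coefficients are
the degree-3 coefficients of `G`. Each term of `G` is a product of univariate series in distinct
variables, hence the coefficient of `yⁿ vᵏ` is a product of univariate coefficients. Only the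
coefficients of `y⁰, …, y³` enter; for `A` and `cosh(u/2)⁻¹` they are found by inverting
`sinh(x/2)/(x/2)` and `cosh(x/2)` modulo `y⁴`, and the resulting identity is checked at each of
the 84 monomials of degree 3.
-/

open Finset

namespace MvPowerSeries

section OfVar

variable {σ R : Type*} [CommSemiring R]

noncomputable def ofVar (i : σ) : PowerSeries R →ₐ[R] MvPowerSeries σ R :=
  rename fun _ : Unit => i

theorem ofVar_X (i : σ) : ofVar i (PowerSeries.X : PowerSeries R) = X i :=
  rename_X _ ()

theorem coeff_single_ofVar (i : σ) (φ : PowerSeries R) (n : ℕ) :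
    coeff (Finsupp.single i n) (ofVar i φ) = PowerSeries.coeff n φ := by
  have := coeff_embDomain_rename ⟨fun _ : Unit => i, fun _ _ _ => rfl⟩ φ (Finsupp.single () n)
  rwa [Finsupp.embDomain_single] at this

theorem coeff_ofVar_of_ne (i : σ) (φ : PowerSeries R) {m : σ →₀ ℕ}
    (hm : m ≠ Finsupp.single i (m i)) : coeff m (ofVar i φ) = 0 := by
  refine coeff_rename_eq_zero _ φ ?_
  rintro ⟨d, rfl⟩
  rw [Finsupp.unique_single d, Finsupp.mapDomain_single, Finsupp.single_eq_same] at hm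
  exact hm rfl

theorem coeff_prod_ofVar [Fintype σ] [DecidableEq σ] (φ : σ → PowerSeries R) (m : σ →₀ ℕ) :
    coeff m (∏ i, ofVar i (φ i)) = ∏ i, PowerSeries.coeff (m i) (φ i) := by
  set l₀ : σ →₀ σ →₀ ℕ := Finsupp.equivFunOnFinite.symm fun i => Finsupp.single i (m i)
  have hl₀ : l₀ ∈ finsuppAntidiag univ m := by simp [mem_finsuppAntidiag, l₀]
  rw [coeff_prod, sum_eq_single_of_mem l₀ hl₀]
  · simp [l₀, coeff_single_ofVar]
  · intro l hl hne
    by_contra hprod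
    have hsingle : ∀ i, l i = Finsupp.single i (l i i) := fun i => by
      by_contra h
      exact hprod (prod_eq_zero (mem_univ i) (coeff_ofVar_of_ne _ _ h))
    have hsum : ∑ i, Finsupp.single i (l i i) = m := by
      rw [← (mem_finsuppAntidiag.mp hl).1]
      exact sum_congr rfl fun i _ => (hsingle i).symm
    refine hne (Finsupp.ext fun i => ?_)
    rw [hsingle i]
    change _ = Finsupp.single i (m i)
    simp [← hsum, Finsupp.finsetSum_apply, Finsupp.single_apply]

theorem coeff_prod_ofVar_inl_mul_ofVar_inr {ι : Type*} [Fintype ι] [DecidableEq ι]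
    (f : ι → PowerSeries R) (g : PowerSeries R) (m : (ι ⊕ Unit) →₀ ℕ) :
    coeff m ((∏ j, ofVar (Sum.inl j) (f j)) * ofVar (Sum.inr ()) g) =
      (∏ j, PowerSeries.coeff (m (Sum.inl j)) (f j)) * PowerSeries.coeff (m (Sum.inr ())) g := by
  simpa [Fintype.prod_sum_type] using coeff_prod_ofVar (Sum.elim f fun _ => g) m

end OfVar

section Expand

variable {σ R : Type*} [CommRing R]

theorem ofVar_expand (i : σ) {p : ℕ} (hp : p ≠ 0) (φ : PowerSeries R) :
    ofVar i (PowerSeries.expand p hp φ) = expand p hp (ofVar i φ) := by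
  have hX : subst (S := R) (X ∘ fun _ : Unit => i) (PowerSeries.X : PowerSeries R) = X i :=
    subst_X (HasSubst.X_comp _) ()
  rw [ofVar, rename_eq_subst, rename_eq_subst, PowerSeries.expand_apply,
    expand_subst p hp (HasSubst.X_comp _), PowerSeries.subst,
    subst_comp_subst_apply (PowerSeries.HasSubst.X_pow hp).const (HasSubst.X_comp _)]
  simp [subst_pow (HasSubst.X_comp _), hX]

theorem constantCoeff_expand_ofVar (i : σ) {p : ℕ} (hp : p ≠ 0) (φ : PowerSeries R) :
    constantCoeff (expand p hp (ofVar i φ)) = PowerSeries.constantCoeff φ := by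
  rw [constantCoeff_expand, ofVar, constantCoeff_rename]
  rfl

theorem expand_ofVar_inv {k : Type*} [Field k] (i : σ) {p : ℕ} (hp : p ≠ 0) (φ : PowerSeries k)
    (hφ : PowerSeries.constantCoeff φ ≠ 0) :
    expand p hp (ofVar i φ⁻¹) = (expand p hp (ofVar i φ))⁻¹ := by
  rw [MvPowerSeries.eq_inv_iff_mul_eq_one, ← map_mul, ← map_mul, PowerSeries.inv_mul_cancel _ hφ,
    map_one, map_one]
  rwa [constantCoeff_expand_ofVar]

end Expand

end MvPowerSeries

namespace PowerSeries

section CauchyProduct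

def cauchyProduct {R : Type*} [Semiring R] (f g : ℕ → R) (n : ℕ) : R :=
  ∑ p ∈ antidiagonal n, f p.1 * g p.2

theorem coeff_mul_eq_cauchyProduct {R : Type*} [Semiring R] {φ ψ : PowerSeries R} {f g : ℕ → R}
    {N : ℕ} (hφ : ∀ n ≤ N, coeff n φ = f n) (hψ : ∀ n ≤ N, coeff n ψ = g n) :
    ∀ n ≤ N, coeff n (φ * ψ) = cauchyProduct f g n := fun n hn => by
  refine (coeff_mul n φ ψ).trans (sum_congr rfl fun p hp => ?_)
  rw [HasAntidiagonal.mem_antidiagonal] at hp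
  rw [hφ p.1 (by omega), hψ p.2 (by omega)]

theorem coeff_inv_eq_of_cauchyProduct {k : Type*} [Field k] {φ : PowerSeries k} {f g : ℕ → k}
    {N : ℕ} (hφ : ∀ n ≤ N, coeff n φ = f n)
    (hfg : ∀ n ≤ N, cauchyProduct f g n = if n = 0 then 1 else 0) :
    ∀ n ≤ N, coeff n φ⁻¹ = g n := by
  have hdvd : X ^ (N + 1) ∣ φ * mk g - 1 := by
    refine X_pow_dvd_iff.mpr fun n hn => ?_
    rw [map_sub, coeff_mul_eq_cauchyProduct hφ (fun n _ => coeff_mk n g) n (by omega),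
      hfg n (by omega), coeff_one]
    exact sub_self _
  have hφ0 : constantCoeff φ ≠ 0 := by
    intro h
    have := hfg 0 (Nat.zero_le _)
    simp [cauchyProduct, ← hφ 0 (Nat.zero_le _), h] at this
  have hdvd' : X ^ (N + 1) ∣ mk g - φ⁻¹ := by
    convert hdvd.mul_left φ⁻¹ using 1
    rw [mul_sub, ← mul_assoc, PowerSeries.inv_mul_cancel _ hφ0, one_mul, mul_one]
  intro n hn
  have := X_pow_dvd_iff.mp hdvd' n (by omega)
  rw [map_sub, coeff_mk, sub_eq_zero] at this
  exact this.symm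

end CauchyProduct

section EvenSeries

-- `cosh (c x)` and `sinh (x/2) / (x/2)` as power series in `y = x²`.

def coshCoeff (c : ℚ) (n : ℕ) : ℚ := c ^ (2 * n) / (2 * n).factorial

def sinhcHalfCoeff (n : ℕ) : ℚ := ((4 : ℚ) ^ n * (2 * n + 1).factorial)⁻¹

noncomputable def coshSeries (c : ℚ) : PowerSeries ℚ := mk (coshCoeff c)

noncomputable def sinhcHalfSeries : PowerSeries ℚ := mk sinhcHalfCoeff

theorem constantCoeff_coshSeries (c : ℚ) : constantCoeff (coshSeries c) = 1 := by
  simp [coshSeries, coshCoeff, ← coeff_zero_eq_constantCoeff_apply]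

theorem constantCoeff_sinhcHalfSeries : constantCoeff sinhcHalfSeries = 1 := by
  simp [sinhcHalfSeries, sinhcHalfCoeff, ← coeff_zero_eq_constantCoeff_apply]

theorem expand_two_smul_coshSeries (c : ℚ) :
    expand 2 two_ne_zero ((2 : ℚ) • coshSeries c) = rescale c (exp ℚ) + rescale (-c) (exp ℚ) := by
  ext n
  rw [coeff_expand, map_add, coeff_rescale, coeff_rescale, coeff_exp, Algebra.algebraMap_self,
    RingHom.id_apply]
  rcases Nat.even_or_odd n with ⟨q, rfl⟩ | hn
  · rw [if_pos (by omega), coeff_smul, coshSeries, coeff_mk, coshCoeff, ← two_mul,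
      Nat.mul_div_cancel_left _ two_pos, Even.neg_pow ⟨q, by ring⟩]
    simp
    ring
  · rw [if_neg (Nat.not_even_iff_odd.mpr hn ∘ (even_iff_two_dvd).mpr), hn.neg_pow]
    ring

theorem X_mul_expand_two_sinhcHalfSeries :
    X * expand 2 two_ne_zero sinhcHalfSeries = rescale 2⁻¹ (exp ℚ) - rescale (-2⁻¹) (exp ℚ) := by
  ext n
  rcases n with _ | n
  · rw [coeff_zero_X_mul, map_sub, coeff_rescale, coeff_rescale]
    simp
  rw [coeff_succ_X_mul, coeff_expand, map_sub, coeff_rescale, coeff_rescale, coeff_exp,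
    Algebra.algebraMap_self, RingHom.id_apply]
  rcases Nat.even_or_odd n with ⟨q, rfl⟩ | hn
  · rw [if_pos (by omega), sinhcHalfSeries, coeff_mk, sinhcHalfCoeff, ← two_mul,
      Nat.mul_div_cancel_left _ two_pos, Odd.neg_pow ⟨q, by ring⟩]
    simp [pow_succ, pow_mul]
    ring
  · rw [if_neg (Nat.not_even_iff_odd.mpr hn ∘ (even_iff_two_dvd).mpr),
      Even.neg_pow (by simpa [Nat.even_add_one] using hn)]
    ring

end EvenSeries

end PowerSeries

namespace MvPowerSeries

open PowerSeries (coshSeries sinhcHalfSeries)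

section Mexp

variable {σ : Type*}

theorem mexp_smul_X (c : ℚ) (i : σ) :
    mexp (c • X i) = ofVar i (PowerSeries.rescale c (PowerSeries.exp ℚ)) := by
  have hX : c • X i = ofVar i (c • PowerSeries.X : PowerSeries ℚ) := by rw [map_smul, ofVar_X]
  ext m
  change ∑ k ∈ range ((m.sum fun _ e => e) + 1), ((k.factorial : ℚ))⁻¹ * coeff m ((c • X i) ^ k) = _
  simp only [hX, ← map_pow]
  by_cases hm : m = Finsupp.single i (m i)
  · obtain ⟨n, rfl⟩ : ∃ n, m = Finsupp.single i n := ⟨_, hm⟩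
    simp only [coeff_single_ofVar, Finsupp.sum_single_index, smul_pow, PowerSeries.coeff_smul,
      PowerSeries.coeff_X_pow, PowerSeries.coeff_rescale, PowerSeries.coeff_exp]
    simp [Finset.sum_ite_eq, mul_comm]
  · simp only [coeff_ofVar_of_ne _ _ hm, mul_zero, sum_const_zero]

theorem mexp_smul_X_add_mexp_neg (c : ℚ) (i : σ) :
    mexp (c • X i) + mexp (-(c • X i)) =
      expand 2 two_ne_zero (ofVar i ((2 : ℚ) • coshSeries c)) := by
  rw [← neg_smul, mexp_smul_X, mexp_smul_X, ← map_add, ← PowerSeries.expand_two_smul_coshSeries,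
    ofVar_expand]

theorem mexp_X_add_mexp_neg_X (i : σ) :
    mexp (X i) + mexp (-X i) = expand 2 two_ne_zero (ofVar i ((2 : ℚ) • coshSeries 1)) := by
  simpa using mexp_smul_X_add_mexp_neg 1 i

theorem mexp_X_add_mexp_neg_X_sub_two (i : σ) :
    mexp (X i) + mexp (-X i) - 2 =
      expand 2 two_ne_zero (ofVar i ((2 : ℚ) • (coshSeries 1 - 1))) := by
  rw [mexp_X_add_mexp_neg_X, smul_sub, map_sub, map_sub, two_smul ℚ (1 : PowerSeries ℚ),
    one_add_one_eq_two, map_ofNat, map_ofNat]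

theorem mcosh_smul_X (c : ℚ) (i : σ) :
    mcosh (c • X i) = expand 2 two_ne_zero (ofVar i (coshSeries c)) := by
  rw [mcosh, mexp_smul_X_add_mexp_neg, map_smul, map_smul, smul_smul]
  norm_num

theorem inv_mcosh_smul_X (c : ℚ) (i : σ) :
    (mcosh (c • X i))⁻¹ = expand 2 two_ne_zero (ofVar i (coshSeries c)⁻¹) := by
  rw [mcosh_smul_X, expand_ofVar_inv _ _ _ (by simp [PowerSeries.constantCoeff_coshSeries])]

theorem eq_expand_ofVar_inv_sinhcHalfSeries {i : σ} {a : MvPowerSeries σ ℚ}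
    (ha : a * (mexp ((2 : ℚ)⁻¹ • X i) - mexp (-((2 : ℚ)⁻¹ • X i))) = X i) :
    a = expand 2 two_ne_zero (ofVar i sinhcHalfSeries⁻¹) := by
  have hS : PowerSeries.constantCoeff sinhcHalfSeries ≠ 0 := by
    simp [PowerSeries.constantCoeff_sinhcHalfSeries]
  rw [← neg_smul, mexp_smul_X, mexp_smul_X, ← map_sub,
    ← PowerSeries.X_mul_expand_two_sinhcHalfSeries, map_mul, ofVar_X, ofVar_expand,
    mul_left_comm] at ha
  rw [expand_ofVar_inv _ _ _ hS, MvPowerSeries.eq_inv_iff_mul_eq_one]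
  · exact mul_left_cancel₀ (nonZeroDivisors.ne_zero X_mem_nonzeroDivisors)
      (ha.trans (mul_one _).symm)
  · rwa [constantCoeff_expand_ofVar]

end Mexp

end MvPowerSeries

section TwistedDefect

variable {ι R : Type*} [Fintype ι]

theorem prod_mul_sum_eq_sum_prod_ite [CommSemiring R] [DecidableEq ι] (a e : ι → R) :
    (∏ j, a j) * ∑ t, e t = ∑ t, ∏ j, if j = t then a j * e j else a j := by
  rw [mul_sum]
  refine sum_congr rfl fun t _ => ?_
  have hsplit : ∀ j, (if j = t then a j * e j else a j) = a j * if j = t then e j else 1 :=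
    fun j => by split_ifs <;> simp
  rw [prod_congr rfl fun j _ => hsplit j, prod_mul_distrib, prod_ite_eq', if_pos (mem_univ t)]

variable [CommRing R]

-- The difference of the two sides of the twisted cancellation formula in terms of the factors
-- `l j = 2cosh(xⱼ/2)`, `a j = A(xⱼ)`, `e j = e^{xⱼ} + e^{-xⱼ}`, `s = cosh(u/2)⁻¹`,
-- `ch = cosh(u/2)` and `w = e^u + e^{-u} - 2`.
def twistedDefect (l a e : ι → R) (s ch w : R) : R :=
  (∏ j, l j * a j) * s ^ 2 -
    ch * (8 * (∏ j, a j) * (∑ j, e j) - 32 * (∏ j, a j) - 24 * (∏ j, a j) * w)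

theorem map_twistedDefect {S F : Type*} [CommRing S] [FunLike F R S] [RingHomClass F R S] (f : F)
    (l a e : ι → R) (s ch w : R) :
    f (twistedDefect l a e s ch w) = twistedDefect (fun j => f (l j)) (fun j => f (a j))
      (fun j => f (e j)) (f s) (f ch) (f w) := by
  simp [twistedDefect, map_prod, map_sum, map_ofNat]

variable [DecidableEq ι]

def twistedDefectCoeff (la s2 a ae ch chw : ℕ → R) (n : ι → ℕ) (k : ℕ) : R :=
  (∏ j, la (n j)) * s2 k - 8 * (∑ t, ∏ j, if j = t then ae (n j) else a (n j)) * ch k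
    + 32 * (∏ j, a (n j)) * ch k + 24 * (∏ j, a (n j)) * chw k

theorem twistedDefectCoeff_congr {la s2 a ae ch chw la' s2' a' ae' ch' chw' : ℕ → R} {N : ℕ}
    {n : ι → ℕ} {k : ℕ} (hn : ∀ j, n j ≤ N) (hk : k ≤ N)
    (hla : ∀ i ≤ N, la i = la' i) (hs2 : ∀ i ≤ N, s2 i = s2' i) (ha : ∀ i ≤ N, a i = a' i)
    (hae : ∀ i ≤ N, ae i = ae' i) (hch : ∀ i ≤ N, ch i = ch' i)
    (hchw : ∀ i ≤ N, chw i = chw' i) :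
    twistedDefectCoeff la s2 a ae ch chw n k = twistedDefectCoeff la' s2' a' ae' ch' chw' n k := by
  simp only [twistedDefectCoeff, hs2 k hk, hch k hk, hchw k hk, fun j => hla _ (hn j),
    fun j => ha _ (hn j), fun j => hae _ (hn j)]

open MvPowerSeries in
theorem coeff_twistedDefect_ofVar (l a e s ch w : PowerSeries R) (m : (ι ⊕ Unit) →₀ ℕ) :
    coeff m (twistedDefect (fun j => ofVar (Sum.inl j) l) (fun j => ofVar (Sum.inl j) a)
        (fun j => ofVar (Sum.inl j) e) (ofVar (Sum.inr ()) s) (ofVar (Sum.inr ()) ch)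
        (ofVar (Sum.inr ()) w)) =
      twistedDefectCoeff (PowerSeries.coeff · (l * a)) (PowerSeries.coeff · (s ^ 2))
        (PowerSeries.coeff · a) (PowerSeries.coeff · (a * e)) (PowerSeries.coeff · ch)
        (PowerSeries.coeff · (ch * w)) (fun j => m (Sum.inl j)) (m (Sum.inr ())) := by
  set P : (ι → PowerSeries R) → PowerSeries R → MvPowerSeries (ι ⊕ Unit) R :=
    fun f g => (∏ j, ofVar (Sum.inl j) (f j)) * ofVar (Sum.inr ()) g
  have hdecomp : twistedDefect (fun j => ofVar (Sum.inl j) l) (fun j => ofVar (Sum.inl j) a)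
      (fun j => ofVar (Sum.inl j) e) (ofVar (Sum.inr ()) s) (ofVar (Sum.inr ()) ch)
      (ofVar (Sum.inr ()) w) =
      P (fun _ => l * a) (s ^ 2) - C 8 * ∑ t, P (fun j => if j = t then a * e else a) ch
        + C 32 * P (fun _ => a) ch + C 24 * P (fun _ => a) (ch * w) := by
    simp only [P, twistedDefect, map_ofNat, map_mul, map_pow, prod_mul_distrib, ← sum_mul,
      apply_ite, ← prod_mul_sum_eq_sum_prod_ite]
    ring
  rw [hdecomp, map_add, map_add, map_sub, coeff_C_mul, coeff_C_mul, coeff_C_mul, map_sum]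
  simp only [P, coeff_prod_ofVar_inl_mul_ofVar_inr]
  simp only [twistedDefectCoeff, apply_ite (PowerSeries.coeff _), ← sum_mul]
  ring

end TwistedDefect

-- The coefficients of `y⁰, …, y³` in `A(x)` (Bernoulli numbers) and in `cosh(x/2)⁻¹`
-- (Euler numbers), where `y = x²`.

def aHatTable (n : ℕ) : ℚ := [1, -1/24, 7/5760, -31/967680].getD n 0

def sechHalfTable (n : ℕ) : ℚ := [1, -1/8, 5/384, -61/46080].getD n 0

open PowerSeries in
def twistedDefectTable (n : Fin 6 → ℕ) (k : ℕ) : ℚ :=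
  twistedDefectCoeff (cauchyProduct (2 * coshCoeff 2⁻¹ ·) aHatTable)
    (cauchyProduct sechHalfTable sechHalfTable) aHatTable
    (cauchyProduct aHatTable (2 * coshCoeff 1 ·)) (coshCoeff 2⁻¹)
    (cauchyProduct (coshCoeff 2⁻¹) fun i => 2 * (coshCoeff 1 i - if i = 0 then 1 else 0)) n k

theorem twistedDefectTable_eq_zero {n : Fin 6 → ℕ} {k : ℕ} (h : ∑ j, n j + k = 3) :
    twistedDefectTable n k = 0 := by
  have key : ∀ k ∈ range 4, ∀ n ∈ Nat.antidiagonalTuple 6 (3 - k), twistedDefectTable n k = 0 := by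
    decide +kernel
  exact key k (mem_range.mpr (by omega)) n (Nat.mem_antidiagonalTuple.mpr (by omega))

namespace MvPowerSeries

open PowerSeries (coshSeries coshCoeff sinhcHalfSeries)

noncomputable def twistedDefectInSquares : MvPowerSeries (Fin 6 ⊕ Unit) ℚ :=
  twistedDefect (fun j => ofVar (Sum.inl j) ((2 : ℚ) • coshSeries 2⁻¹))
    (fun j => ofVar (Sum.inl j) sinhcHalfSeries⁻¹)
    (fun j => ofVar (Sum.inl j) ((2 : ℚ) • coshSeries 1))
    (ofVar (Sum.inr ()) (coshSeries 2⁻¹)⁻¹) (ofVar (Sum.inr ()) (coshSeries 2⁻¹))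
    (ofVar (Sum.inr ()) ((2 : ℚ) • (coshSeries 1 - 1)))

theorem expand_twistedDefectInSquares :
    expand 2 two_ne_zero twistedDefectInSquares =
      twistedDefect
        (fun j => mexp ((2 : ℚ)⁻¹ • X (Sum.inl j)) + mexp (-((2 : ℚ)⁻¹ • X (Sum.inl j))))
        (fun j => expand 2 two_ne_zero (ofVar (Sum.inl j) sinhcHalfSeries⁻¹))
        (fun j => mexp (X (Sum.inl j)) + mexp (-X (Sum.inl j)))
        (mcosh ((2 : ℚ)⁻¹ • X (Sum.inr ())))⁻¹ (mcosh ((2 : ℚ)⁻¹ • X (Sum.inr ())))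
        (mexp (X (Sum.inr ())) + mexp (-X (Sum.inr ())) - 2) := by
  rw [twistedDefectInSquares, map_twistedDefect, inv_mcosh_smul_X, mcosh_smul_X,
    mexp_X_add_mexp_neg_X_sub_two]
  simp only [mexp_smul_X_add_mexp_neg, mexp_X_add_mexp_neg_X]

theorem coeff_twistedDefectInSquares_eq_zero {v : (Fin 6 ⊕ Unit) →₀ ℕ} (hv : v.degree = 3) :
    coeff v twistedDefectInSquares = 0 := by
  have hsum : ∑ j, v (Sum.inl j) + v (Sum.inr ()) = 3 := by
    simpa [Finsupp.degree_eq_sum, Fintype.sum_sum_type] using hv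
  have hle (i : Fin 6 ⊕ Unit) : v i ≤ 3 := hv ▸ Finsupp.le_degree i v
  have hcosh (c : ℚ) : ∀ n ≤ 3, PowerSeries.coeff n (coshSeries c) = coshCoeff c n :=
    fun n _ => PowerSeries.coeff_mk n _
  have htwoCosh (c : ℚ) :
      ∀ n ≤ 3, PowerSeries.coeff n ((2 : ℚ) • coshSeries c) = 2 * coshCoeff c n := fun n _ => by
    rw [PowerSeries.coeff_smul, coshSeries, PowerSeries.coeff_mk, smul_eq_mul]
  have hw : ∀ n ≤ 3, PowerSeries.coeff n ((2 : ℚ) • (coshSeries 1 - 1)) =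
      2 * (coshCoeff 1 n - if n = 0 then 1 else 0) := fun n _ => by
    rw [PowerSeries.coeff_smul, map_sub, coshSeries, PowerSeries.coeff_mk, PowerSeries.coeff_one,
      smul_eq_mul]
  have haHat : ∀ n ≤ 3, PowerSeries.coeff n sinhcHalfSeries⁻¹ = aHatTable n :=
    PowerSeries.coeff_inv_eq_of_cauchyProduct (fun n _ => PowerSeries.coeff_mk n _)
      (by decide +kernel)
  have hsech : ∀ n ≤ 3, PowerSeries.coeff n (coshSeries 2⁻¹)⁻¹ = sechHalfTable n :=
    PowerSeries.coeff_inv_eq_of_cauchyProduct (hcosh 2⁻¹) (by decide +kernel)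
  rw [twistedDefectInSquares, coeff_twistedDefect_ofVar, pow_two,
    twistedDefectCoeff_congr (N := 3) (fun j => hle _) (hle _)
      (PowerSeries.coeff_mul_eq_cauchyProduct (htwoCosh 2⁻¹) haHat)
      (PowerSeries.coeff_mul_eq_cauchyProduct hsech hsech) haHat
      (PowerSeries.coeff_mul_eq_cauchyProduct haHat (htwoCosh 1)) (hcosh 2⁻¹)
      (PowerSeries.coeff_mul_eq_cauchyProduct (hcosh 2⁻¹) hw)]
  exact twistedDefectTable_eq_zero hsum

theorem coeff_expand_twistedDefectInSquares_eq_zero {m : (Fin 6 ⊕ Unit) →₀ ℕ}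
    (hm : m.degree = 6) : coeff m (expand 2 two_ne_zero twistedDefectInSquares) = 0 := by
  by_cases heven : ∀ i, 2 ∣ m i
  · set v : (Fin 6 ⊕ Unit) →₀ ℕ := Finsupp.mapRange (· / 2) (Nat.zero_div 2) m
    have hmv : m = 2 • v := Finsupp.ext fun i => by simp [v, Nat.mul_div_cancel' (heven i)]
    rw [hmv, map_nsmul, smul_eq_mul] at hm
    rw [hmv, coeff_expand_smul]
    exact coeff_twistedDefectInSquares_eq_zero (by omega)
  · push Not at heven
    obtain ⟨i, hi⟩ := heven
    exact coeff_expand_of_not_dvd 2 two_ne_zero _ hi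

end MvPowerSeries

/-- The Han–Zhang twisted 12-dimensional miraculous cancellation formula (eq. (0.6) with
`W = TX`): `{L̂(TX)/cosh²(c/2)}^{(12)} =
  {[8Â(TX)ch(T_ℂX) - 32Â(TX) - 24Â(TX)(e^c+e^{-c}-2)] cosh(c/2)}^{(12)}`,
at the level of Chern roots `±xⱼ` of `T_ℂX` (`dim X = 12`), with `u` the Euler form of the
rank-2 bundle `ξ`. `A j` is the Â-series of `xⱼ`, and `(mcosh ((2:ℚ)⁻¹ • u))⁻¹` is the
multiplicative inverse of the unit power series `cosh(u/2)`. -/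
theorem twisted_miraculous_cancellation_dim12
    (A : Fin 6 → MvPowerSeries (Fin 6 ⊕ Unit) ℚ)
    (hA : ∀ j, A j * (mexp ((2 : ℚ)⁻¹ • X (Sum.inl j)) -
        mexp (-((2 : ℚ)⁻¹ • X (Sum.inl j)))) = X (Sum.inl j))
    (m : (Fin 6 ⊕ Unit) →₀ ℕ) (hm : (m.sum fun _ e => e) = 6) :
    MvPowerSeries.coeff m
      ((∏ j, (mexp ((2 : ℚ)⁻¹ • X (Sum.inl j)) + mexp (-((2 : ℚ)⁻¹ • X (Sum.inl j)))) * A j) *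
          ((mcosh ((2 : ℚ)⁻¹ • X (Sum.inr ())))⁻¹) ^ 2
        - mcosh ((2 : ℚ)⁻¹ • X (Sum.inr ())) *
          (8 * (∏ j, A j) * (∑ j, (mexp (X (Sum.inl j)) + mexp (-X (Sum.inl j))))
            - 32 * (∏ j, A j)
            - 24 * (∏ j, A j) *
              (mexp (X (Sum.inr ())) + mexp (-X (Sum.inr ())) - 2)))
    = 0 := by
  obtain rfl :
      A = fun j => expand 2 two_ne_zero (ofVar (Sum.inl j) PowerSeries.sinhcHalfSeries⁻¹) :=
    funext fun j => eq_expand_ofVar_inv_sinhcHalfSeries (hA j)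
  have h := coeff_expand_twistedDefectInSquares_eq_zero hm
  rw [expand_twistedDefectInSquares] at h
  exact h
end
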